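/- arXiv:1812.06130 — 5 statements merged into one kernel-verified Lean document; each statement's English description precedes it below -/
import Mathlib

section
/- Let $f:[a,b]\times[c,d]\to\mathbb{R}$ be absolutely continuous with $f(x,y)=\int_a^x\int_c^y f_{ts}(t,s)\,ds\,dt$ for all $(x,y)$ (in particular $f$ vanishes on the edges $x=a$ and $y=c$), and suppose $\int_c^d\int_a^b \left(\frac{\partial^2 f}{\partial x\partial y}\right)^2 dx\,dy < \infty$. Then $\int_c^d\int_a^b f^2(x,y)\,dx\,dy \le \frac{16}{\pi^4}(b-a)^2(d-c)^2 \int_c^d\int_a^b \left(\frac{\partial^2 f}{\partial x\partial y}\right)^2 dx\,dy$. -/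
open MeasureTheory Real

section WirtingerAux
open Set ENNReal

lemma ofReal_int_le' {α : Type*} [MeasurableSpace α] (μ : Measure α) (v : α → ℝ) :
    ENNReal.ofReal (∫ x, v x ∂μ) ≤ ∫⁻ x, ENNReal.ofReal (v x) ∂μ := by
  by_cases h : Integrable v μ
  · have h1 : ∫ x, v x ∂μ ≤ ∫ x, max (v x) 0 ∂μ :=
      integral_mono h (h.pos_part) (fun x => le_max_left _ _)
    have h2 : ENNReal.ofReal (∫ x, max (v x) 0 ∂μ) = ∫⁻ x, ENNReal.ofReal (max (v x) 0) ∂μ :=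
      ofReal_integral_eq_lintegral_ofReal h.pos_part (ae_of_all _ fun x => le_max_right _ _)
    have h3 : ∀ x, ENNReal.ofReal (max (v x) 0) = ENNReal.ofReal (v x) := by
      intro x
      rcases le_or_gt 0 (v x) with h' | h'
      · rw [max_eq_left h']
      · rw [max_eq_right (le_of_lt h'), ENNReal.ofReal_of_nonpos (le_of_lt h')]
        simp
    calc ENNReal.ofReal (∫ x, v x ∂μ) ≤ ENNReal.ofReal (∫ x, max (v x) 0 ∂μ) :=
          ENNReal.ofReal_le_ofReal h1
      _ = ∫⁻ x, ENNReal.ofReal (max (v x) 0) ∂μ := h2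
      _ = ∫⁻ x, ENNReal.ofReal (v x) ∂μ := lintegral_congr h3
  · rw [integral_undef h]; simp

lemma ofReal_abs_int_le' {α : Type*} [MeasurableSpace α] (μ : Measure α) (v : α → ℝ) :
    ENNReal.ofReal |∫ x, v x ∂μ| ≤ ∫⁻ x, ENNReal.ofReal |v x| ∂μ := by
  calc ENNReal.ofReal |∫ x, v x ∂μ| ≤ ENNReal.ofReal (∫ x, |v x| ∂μ) := by
        apply ENNReal.ofReal_le_ofReal
        simpa [Real.norm_eq_abs] using norm_integral_le_integral_norm (μ := μ) v
    _ ≤ ∫⁻ x, ENNReal.ofReal |v x| ∂μ := ofReal_int_le' μ _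

lemma lw_aux' (a b : ℝ) (hab : a < b) (g : ℝ → ℝ≥0∞) (hg : Measurable g) :
    ∫⁻ x in Ioc a b, (∫⁻ t in Ioc a x, g t) ^ 2 ≤
      ENNReal.ofReal ((2 * (b - a) / π) ^ 2) * ∫⁻ t in Ioc a b, g t ^ 2 := by
  have hL : 0 < b - a := by linarith
  set k : ℝ := π / (2 * (b - a)) with hk_def
  have hk : 0 < k := by positivity
  set w : ℝ → ℝ := fun t => Real.cos (k * (t - a)) with hw_def
  set W : ℝ → ℝ := fun x => (2 * (b - a) / π) * Real.sin (k * (x - a)) with hW_def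
  have hkL : k * (b - a) = π / 2 := by rw [hk_def]; field_simp
  -- basic positivity facts
  have hw_pos : ∀ t ∈ Ico a b, 0 < w t := by
    intro t ht
    apply Real.cos_pos_of_mem_Ioo
    constructor
    · nlinarith [Real.pi_pos, ht.1, ht.2]
    · have : k * (t - a) < k * (b - a) := by nlinarith [ht.2]
      linarith [hkL ▸ this]
  have hw_nonneg : ∀ t ∈ Icc a b, 0 ≤ w t := by
    intro t ht
    apply Real.cos_nonneg_of_mem_Icc
    constructor
    · nlinarith [Real.pi_pos, ht.1]
    · have : k * (t - a) ≤ k * (b - a) := by nlinarith [ht.2]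
      linarith [hkL ▸ this]
  have hW_nonneg : ∀ x ∈ Icc a b, 0 ≤ W x := by
    intro x hx
    have h1 : 0 ≤ k * (x - a) := by nlinarith [hx.1]
    have h2 : k * (x - a) ≤ π := by
      have : k * (x - a) ≤ k * (b - a) := by nlinarith [hx.2]
      rw [hkL] at this; linarith [Real.pi_pos]
    have := Real.sin_nonneg_of_nonneg_of_le_pi h1 h2
    positivity
  -- antiderivative facts
  have hW_deriv : ∀ t : ℝ, HasDerivAt (fun t => (2*(b-a)/π) * Real.sin (k * (t - a))) (w t) t := by
    intro t
    have h1 : HasDerivAt (fun t => k * (t - a)) k t := by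
      simpa using ((hasDerivAt_id t).sub_const a).const_mul k
    have h2 := (h1.sin).const_mul (2*(b-a)/π)
    refine h2.congr_deriv ?_
    simp only [hw_def, hk_def]
    field_simp
  have hInt_w : ∀ x ∈ Icc a b, ∫ t in a..x, w t = W x := by
    intro x hx
    have hint : IntervalIntegrable w volume a x := by
      apply Continuous.intervalIntegrable; simp only [hw_def]; fun_prop
    rw [intervalIntegral.integral_eq_sub_of_hasDerivAt (fun t _ => hW_deriv t) hint]
    simp [hW_def]
  have hV_deriv : ∀ t : ℝ, HasDerivAt (fun x => -((2*(b-a)/π)^2 * Real.cos (k * (x - a)))) (W t) t := by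
    intro t
    have h1 : HasDerivAt (fun x => k * (x - a)) k t := by
      simpa using ((hasDerivAt_id t).sub_const a).const_mul k
    have h2 := ((h1.cos).const_mul ((2*(b-a)/π)^2)).neg
    refine h2.congr_deriv ?_
    simp only [hW_def, hk_def]
    field_simp
  have hInt_W : ∀ t ∈ Icc a b, ∫ x in t..b, W x = (2*(b-a)/π)^2 * w t := by
    intro t ht
    have hint : IntervalIntegrable W volume t b := by
      apply Continuous.intervalIntegrable; simp only [hW_def]; fun_prop
    rw [intervalIntegral.integral_eq_sub_of_hasDerivAt (fun x _ => hV_deriv x) hint]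
    have : Real.cos (k * (b - a)) = 0 := by rw [hkL]; exact Real.cos_pi_div_two
    simp [hw_def, this]
  classical
  set B : ℝ → ℝ≥0∞ := fun t => ENNReal.ofReal (w t) with hB_def
  set F : ℝ → ℝ≥0∞ := fun t => (B t)⁻¹ * g t ^ 2 with hF_def
  have hw_cont : Continuous w := by simp only [hw_def]; fun_prop
  have hW_cont : Continuous W := by simp only [hW_def]; fun_prop
  have hBmeas : Measurable B := ENNReal.measurable_ofReal.comp hw_cont.measurable
  have hFmeas : Measurable F := (hBmeas.inv).mul (hg.pow_const 2)
  have hpq : (2:ℝ).HolderConjugate 2 := by constructor <;> norm_num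
  have step1 : ∀ x ∈ Ioo a b, (∫⁻ t in Ioc a x, g t) ^ 2 ≤
      ENNReal.ofReal (W x) * ∫⁻ t in Ioc a x, F t := by
    intro x hx
    have hBt : ∀ t ∈ Ioc a x, B t ≠ 0 ∧ B t ≠ ∞ := fun t ht =>
      ⟨(ENNReal.ofReal_pos.mpr (hw_pos t ⟨le_of_lt ht.1, lt_of_le_of_lt ht.2 hx.2⟩)).ne',
        ENNReal.ofReal_ne_top⟩
    set f1 : ℝ → ℝ≥0∞ := fun t => B t ^ (2⁻¹:ℝ) with hf1_def
    set f2 : ℝ → ℝ≥0∞ := fun t => B t ^ (-(2⁻¹):ℝ) * g t with hf2_def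
    have key : ∫⁻ t in Ioc a x, g t = ∫⁻ t in Ioc a x, (f1 * f2) t := by
      apply setLIntegral_congr_fun measurableSet_Ioc
      intro t ht
      obtain ⟨h0, htop⟩ := hBt t ht
      simp only [Pi.mul_apply, hf1_def, hf2_def]
      rw [← mul_assoc, ← ENNReal.rpow_add _ _ h0 htop]
      norm_num
    have hf1m : Measurable f1 := hBmeas.pow_const (2⁻¹:ℝ)
    have hf2m : Measurable f2 := (hBmeas.pow_const (-(2⁻¹):ℝ)).mul hg
    have hold := ENNReal.lintegral_mul_le_Lp_mul_Lq (volume.restrict (Ioc a x)) hpq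
      hf1m.aemeasurable hf2m.aemeasurable
    have e1 : ∫⁻ t in Ioc a x, f1 t ^ (2:ℝ) = ∫⁻ t in Ioc a x, B t := by
      apply lintegral_congr
      intro t
      show (B t ^ (2⁻¹:ℝ)) ^ (2:ℝ) = B t
      rw [← ENNReal.rpow_mul]
      norm_num
    have e2 : ∫⁻ t in Ioc a x, f2 t ^ (2:ℝ) = ∫⁻ t in Ioc a x, F t := by
      apply lintegral_congr
      intro t
      show (B t ^ (-(2⁻¹):ℝ) * g t) ^ (2:ℝ) = (B t)⁻¹ * g t ^ 2
      rw [ENNReal.mul_rpow_of_nonneg _ _ (by norm_num : (0:ℝ) ≤ 2), ← ENNReal.rpow_mul,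
        ← ENNReal.rpow_natCast (g t) 2]
      norm_num
      rw [ENNReal.rpow_neg_one]
    have eB : ∫⁻ t in Ioc a x, B t = ENNReal.ofReal (W x) := by
      rw [hB_def]
      rw [← ofReal_integral_eq_lintegral_ofReal]
      · rw [← intervalIntegral.integral_of_le (le_of_lt hx.1),
          hInt_w x ⟨le_of_lt hx.1, le_of_lt hx.2⟩]
      · exact (hw_cont.integrableOn_Ioc)
      · exact (ae_restrict_iff' measurableSet_Ioc).mpr (ae_of_all _ fun t ht =>
          hw_nonneg t ⟨le_of_lt ht.1, le_trans ht.2 (le_of_lt hx.2)⟩)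
    rw [key]
    calc (∫⁻ t in Ioc a x, (f1 * f2) t) ^ 2
        ≤ ((∫⁻ t in Ioc a x, f1 t ^ (2:ℝ)) ^ (1/(2:ℝ)) *
           (∫⁻ t in Ioc a x, f2 t ^ (2:ℝ)) ^ (1/(2:ℝ))) ^ 2 := by
          exact pow_le_pow_left' hold 2
      _ = (∫⁻ t in Ioc a x, f1 t ^ (2:ℝ)) * (∫⁻ t in Ioc a x, f2 t ^ (2:ℝ)) := by
          rw [mul_pow, ← ENNReal.rpow_natCast (_ ^ (1/(2:ℝ))) 2,
            ← ENNReal.rpow_natCast (_ ^ (1/(2:ℝ))) 2, ← ENNReal.rpow_mul, ← ENNReal.rpow_mul]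
          norm_num
      _ = ENNReal.ofReal (W x) * ∫⁻ t in Ioc a x, F t := by rw [e1, e2, eB]
  have hIoo : volume.restrict (Ioo a b) = volume.restrict (Ioc a b) :=
    Measure.restrict_congr_set Ioo_ae_eq_Ioc
  have hPrim_meas : Measurable (fun x => ∫⁻ t in Ioc a x, F t) := by
    apply Monotone.measurable
    intro x1 x2 h12
    exact lintegral_mono_set (Ioc_subset_Ioc_right h12)
  have hWm : Measurable (fun x => ENNReal.ofReal (W x)) :=
    ENNReal.measurable_ofReal.comp hW_cont.measurable
  have C_def : (0:ℝ) ≤ (2*(b-a)/π)^2 := by positivity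
  calc ∫⁻ x in Ioc a b, (∫⁻ t in Ioc a x, g t) ^ 2
      = ∫⁻ x in Ioo a b, (∫⁻ t in Ioc a x, g t) ^ 2 := by rw [hIoo]
    _ ≤ ∫⁻ x in Ioo a b, ENNReal.ofReal (W x) * ∫⁻ t in Ioc a x, F t := by
        exact setLIntegral_mono (hWm.mul hPrim_meas) step1
    _ = ∫⁻ x in Ioo a b, ∫⁻ t in Ioo a b, ENNReal.ofReal (W x) * ((Ioc a x).indicator F t) := by
        apply setLIntegral_congr_fun measurableSet_Ioo ?_
        intro x hx
        beta_reduce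
        have hsub : Ioc a x ⊆ Ioo a b := fun t ht => ⟨ht.1, lt_of_le_of_lt ht.2 hx.2⟩
        rw [lintegral_const_mul' _ _ ENNReal.ofReal_ne_top,
          lintegral_indicator measurableSet_Ioc F,
          Measure.restrict_restrict measurableSet_Ioc,
          Set.inter_eq_left.mpr hsub]
    _ = ∫⁻ t in Ioo a b, ∫⁻ x in Ioo a b, ENNReal.ofReal (W x) * ((Ioc a x).indicator F t) := by
        apply lintegral_lintegral_swap
        apply Measurable.aemeasurable
        apply Measurable.mul
        · exact hWm.comp measurable_fst
        · have : (fun p : ℝ × ℝ => (Ioc a p.1).indicator F p.2)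
              = Set.indicator {q : ℝ × ℝ | a < q.2 ∧ q.2 ≤ q.1} (fun q => F q.2) := by
            ext p
            simp only [Set.indicator_apply, Set.mem_Ioc, Set.mem_setOf_eq, and_comm]
          rw [this]
          exact (hFmeas.comp measurable_snd).indicator
            ((measurableSet_lt measurable_const measurable_snd).inter
              (measurableSet_le measurable_snd measurable_fst))
    _ = ∫⁻ t in Ioo a b, F t * ENNReal.ofReal ((2*(b-a)/π)^2 * w t) := by
        apply setLIntegral_congr_fun measurableSet_Ioo ?_
        intro t ht
        have key : ∀ x, ENNReal.ofReal (W x) * (Ioc a x).indicator F t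
            = (Ici t).indicator (fun x => ENNReal.ofReal (W x)) x * F t := by
          intro x
          by_cases h : t ≤ x
          · have h1 : t ∈ Ioc a x := ⟨ht.1, h⟩
            have h2 : x ∈ Ici t := h
            rw [Set.indicator_of_mem h1, Set.indicator_of_mem h2]
          · have h1 : t ∉ Ioc a x := fun hc => h hc.2
            have h2 : x ∉ Ici t := h
            rw [Set.indicator_of_notMem h1, Set.indicator_of_notMem h2]
            simp
        simp_rw [key]
        rw [lintegral_mul_const _ (hWm.indicator measurableSet_Ici),
          lintegral_indicator measurableSet_Ici _,
          Measure.restrict_restrict measurableSet_Ici]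
        have hset : Ici t ∩ Ioo a b = Ico t b := by
          ext u
          simp only [Set.mem_inter_iff, Set.mem_Ici, Set.mem_Ioo, Set.mem_Ico]
          constructor
          · rintro ⟨h1, _, h3⟩; exact ⟨h1, h3⟩
          · rintro ⟨h1, h2⟩; exact ⟨h1, lt_of_lt_of_le ht.1 h1, h2⟩
        rw [hset]
        have hIco : volume.restrict (Ico t b) = volume.restrict (Ioc t b) := by
          rw [Measure.restrict_congr_set Ico_ae_eq_Ioc]
        rw [hIco]
        have hval : ∫⁻ x in Ioc t b, ENNReal.ofReal (W x) =
            ENNReal.ofReal ((2*(b-a)/π)^2 * w t) := by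
          rw [← ofReal_integral_eq_lintegral_ofReal]
          · rw [← intervalIntegral.integral_of_le (le_of_lt ht.2),
              hInt_W t ⟨le_of_lt ht.1, le_of_lt ht.2⟩]
          · exact hW_cont.integrableOn_Ioc
          · exact (ae_restrict_iff' measurableSet_Ioc).mpr (ae_of_all _ fun u hu =>
              hW_nonneg u ⟨le_of_lt (lt_trans ht.1 hu.1), hu.2⟩)
        rw [hval, mul_comm]
    _ = ∫⁻ t in Ioo a b, ENNReal.ofReal ((2*(b-a)/π)^2) * g t ^ 2 := by
        apply setLIntegral_congr_fun measurableSet_Ioo ?_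
        intro t ht
        beta_reduce
        have hFt : F t = (B t)⁻¹ * g t ^ 2 := rfl
        have hB0 : B t ≠ 0 := (ENNReal.ofReal_pos.mpr (hw_pos t ⟨le_of_lt ht.1, ht.2⟩)).ne'
        have hBtop : B t ≠ ∞ := ENNReal.ofReal_ne_top
        have hwB : ENNReal.ofReal ((2*(b-a)/π)^2 * w t)
            = ENNReal.ofReal ((2*(b-a)/π)^2) * B t := ENNReal.ofReal_mul C_def
        rw [hFt, hwB]
        calc (B t)⁻¹ * g t ^ 2 * (ENNReal.ofReal ((2*(b-a)/π)^2) * B t)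
            = ENNReal.ofReal ((2*(b-a)/π)^2) * (((B t)⁻¹ * B t) * g t ^ 2) := by ring
          _ = ENNReal.ofReal ((2*(b-a)/π)^2) * g t ^ 2 := by
              rw [ENNReal.inv_mul_cancel hB0 hBtop, one_mul]
    _ = ENNReal.ofReal ((2*(b-a)/π)^2) * ∫⁻ t in Ioc a b, g t ^ 2 := by
        rw [lintegral_const_mul' _ _ ENNReal.ofReal_ne_top, hIoo]

end WirtingerAux

open Set ENNReal in
set_option maxHeartbeats 2000000 in
theorem wirtinger_double_integral
    (a b c d : ℝ) (hab : a < b) (hcd : c < d)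
    (f fxy : ℝ → ℝ → ℝ)
    (hrep : ∀ x ∈ Set.Icc a b, ∀ y ∈ Set.Icc c d,
      f x y = ∫ t in a..x, ∫ s in c..y, fxy t s)
    (hL2 : IntegrableOn (fun p : ℝ × ℝ => (fxy p.1 p.2) ^ 2)
      (Set.Icc a b ×ˢ Set.Icc c d)) :
    (∫ y in c..d, ∫ x in a..b, (f x y) ^ 2) ≤
      16 / π ^ 4 * (b - a) ^ 2 * (d - c) ^ 2 *
        ∫ y in c..d, ∫ x in a..b, (fxy x y) ^ 2 := by
  have hπ : (0:ℝ) < π := Real.pi_pos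
  have hab' : a ≤ b := le_of_lt hab
  have hcd' : c ≤ d := le_of_lt hcd
  -- measurable representative ψ of ofReal |fxy|
  have haem : AEMeasurable (fun p : ℝ × ℝ => fxy p.1 p.2 ^ 2)
      ((volume : Measure (ℝ × ℝ)).restrict (Set.Icc a b ×ˢ Set.Icc c d)) :=
    hL2.1.aemeasurable
  set χ : ℝ × ℝ → ℝ := haem.mk _ with hχdef
  have hχmeas : Measurable χ := haem.measurable_mk
  set ψ : ℝ × ℝ → ℝ≥0∞ := fun p => ENNReal.ofReal (χ p) ^ (2⁻¹ : ℝ) with hψdef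
  have hψmeas : Measurable ψ := (ENNReal.measurable_ofReal.comp hχmeas).pow_const _
  set ρ : Measure (ℝ × ℝ) :=
    (volume.restrict (Set.Ioc a b)).prod (volume.restrict (Set.Ioc c d)) with hρdef
  have hρ_eq : ρ = (volume : Measure (ℝ × ℝ)).restrict (Set.Ioc a b ×ˢ Set.Ioc c d) := by
    rw [hρdef, Measure.prod_restrict]
    rfl
  have hρ_le : ρ ≤ (volume : Measure (ℝ × ℝ)).restrict (Set.Icc a b ×ˢ Set.Icc c d) := by
    rw [hρ_eq]
    exact Measure.restrict_mono (Set.prod_mono Set.Ioc_subset_Icc_self Set.Ioc_subset_Icc_self)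
      le_rfl
  have hψae : ∀ᵐ p ∂ρ, ψ p = ENNReal.ofReal |fxy p.1 p.2| := by
    have h0 : ∀ᵐ p ∂ρ, fxy p.1 p.2 ^ 2 = χ p :=
      (Measure.absolutelyContinuous_of_le hρ_le).ae_eq haem.ae_eq_mk
    filter_upwards [h0] with p hp
    rw [hψdef]
    simp only
    rw [← hp, ← sq_abs (fxy p.1 p.2), ENNReal.ofReal_pow (abs_nonneg _),
      ← ENNReal.rpow_natCast (ENNReal.ofReal |fxy p.1 p.2|) 2, ← ENNReal.rpow_mul]
    norm_num
  have hψae2 : ∀ᵐ p ∂ρ, ψ p ^ 2 = ENNReal.ofReal (fxy p.1 p.2 ^ 2) := by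
    filter_upwards [hψae] with p hp
    rw [hp, ← ENNReal.ofReal_pow (abs_nonneg _), sq_abs]
  have hslice : ∀ᵐ t ∂(volume.restrict (Set.Ioc a b)),
      ∀ᵐ s ∂(volume.restrict (Set.Ioc c d)), ψ (t, s) = ENNReal.ofReal |fxy t s| :=
    Measure.ae_ae_of_ae_prod hψae
  -- the primitive in the second variable
  set Ψ : ℝ → ℝ → ℝ≥0∞ := fun t y => ∫⁻ s in Set.Ioc c y, ψ (t, s) with hΨdef
  have hΨunc : Measurable (fun q : ℝ × ℝ => Ψ q.1 q.2) := by
    have heq : (fun q : ℝ × ℝ => Ψ q.1 q.2) = fun q : ℝ × ℝ =>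
        ∫⁻ s, ({z : (ℝ × ℝ) × ℝ | c < z.2 ∧ z.2 ≤ z.1.2}.indicator
          (fun z => ψ (z.1.1, z.2)) (q, s)) := by
      funext q
      rw [hΨdef]
      simp only
      rw [← lintegral_indicator measurableSet_Ioc]
      apply lintegral_congr
      intro s
      by_cases h : s ∈ Set.Ioc c q.2
      · rw [Set.indicator_of_mem h, Set.indicator_of_mem (by exact ⟨h.1, h.2⟩)]
      · rw [Set.indicator_of_notMem h,
          Set.indicator_of_notMem (fun hc => h ⟨hc.1, hc.2⟩)]
    rw [heq]
    apply Measurable.lintegral_prod_right'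
    apply Measurable.indicator
    · exact hψmeas.comp ((measurable_fst.comp measurable_fst).prodMk measurable_snd)
    · exact (measurableSet_lt measurable_const measurable_snd).inter
        (measurableSet_le measurable_snd (measurable_snd.comp measurable_fst))
  have hΨt : ∀ y, Measurable (fun t => Ψ t y) := by
    intro y
    have h : (fun t => Ψ t y) = (fun q : ℝ × ℝ => Ψ q.1 q.2) ∘ (fun t => (t, y)) := rfl
    rw [h]
    exact hΨunc.comp (measurable_id.prodMk measurable_const)
  have hψt : ∀ t, Measurable (fun s => ψ (t, s)) := by
    intro t
    exact hψmeas.comp (measurable_const.prodMk measurable_id)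
  -- pointwise bound
  have key_bound : ∀ x ∈ Set.Icc a b, ∀ y ∈ Set.Icc c d,
      ENNReal.ofReal (f x y ^ 2) ≤ (∫⁻ t in Set.Ioc a x, Ψ t y) ^ 2 := by
    intro x hx y hy
    have habs : ENNReal.ofReal |f x y| ≤ ∫⁻ t in Set.Ioc a x, Ψ t y := by
      rw [hrep x hx y hy, intervalIntegral.integral_of_le hx.1]
      calc ENNReal.ofReal |∫ t in Set.Ioc a x, (∫ s in c..y, fxy t s)|
          ≤ ∫⁻ t in Set.Ioc a x, ENNReal.ofReal |∫ s in c..y, fxy t s| :=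
            ofReal_abs_int_le' _ _
        _ ≤ ∫⁻ t in Set.Ioc a x, ∫⁻ s in Set.Ioc c y, ENNReal.ofReal |fxy t s| := by
            apply lintegral_mono
            intro t
            show ENNReal.ofReal |∫ s in c..y, fxy t s|
              ≤ ∫⁻ s in Set.Ioc c y, ENNReal.ofReal |fxy t s|
            rw [intervalIntegral.integral_of_le hy.1]
            exact ofReal_abs_int_le' _ _
        _ = ∫⁻ t in Set.Ioc a x, Ψ t y := by
            apply lintegral_congr_ae
            have h1 := ae_restrict_of_ae_restrict_of_subset
              (Set.Ioc_subset_Ioc_right hx.2) hslice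
            filter_upwards [h1] with t ht
            rw [hΨdef]
            simp only
            apply lintegral_congr_ae
            have h2 := ae_restrict_of_ae_restrict_of_subset
              (Set.Ioc_subset_Ioc_right hy.2) ht
            filter_upwards [h2] with s hs
            rw [hs]
    calc ENNReal.ofReal (f x y ^ 2)
        = ENNReal.ofReal |f x y| ^ 2 := by
          rw [← sq_abs (f x y), ENNReal.ofReal_pow (abs_nonneg _)]
      _ ≤ (∫⁻ t in Set.Ioc a x, Ψ t y) ^ 2 := pow_le_pow_left' habs 2
  set C1 : ℝ≥0∞ := ENNReal.ofReal ((2 * (b - a) / π) ^ 2) with hC1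
  set C2 : ℝ≥0∞ := ENNReal.ofReal ((2 * (d - c) / π) ^ 2) with hC2
  set R : ℝ := ∫ y in c..d, ∫ x in a..b, fxy x y ^ 2 with hR
  have hR_nonneg : 0 ≤ R := by
    apply intervalIntegral.integral_nonneg hcd'
    intro y _
    apply intervalIntegral.integral_nonneg hab'
    intro x _
    positivity
  have hInt : Integrable (fun p : ℝ × ℝ => fxy p.1 p.2 ^ 2) ρ := by
    rw [hρ_eq]
    exact hL2.mono_set (Set.prod_mono Set.Ioc_subset_Icc_self Set.Ioc_subset_Icc_self)
  have hT : ∫⁻ t in Set.Ioc a b, ∫⁻ s in Set.Ioc c d, ψ (t, s) ^ 2 = ENNReal.ofReal R := by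
    have e1 : ∫⁻ t in Set.Ioc a b, ∫⁻ s in Set.Ioc c d, ψ (t, s) ^ 2
        = ∫⁻ p, ψ p ^ 2 ∂ρ := by
      rw [hρdef, lintegral_prod _ ((hψmeas.pow_const 2).aemeasurable)]
    have e2 : ∫⁻ p, ψ p ^ 2 ∂ρ = ∫⁻ p, ENNReal.ofReal (fxy p.1 p.2 ^ 2) ∂ρ :=
      lintegral_congr_ae hψae2
    have e3 : ∫⁻ p, ENNReal.ofReal (fxy p.1 p.2 ^ 2) ∂ρ
        = ENNReal.ofReal (∫ p, fxy p.1 p.2 ^ 2 ∂ρ) :=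
      (ofReal_integral_eq_lintegral_ofReal hInt (ae_of_all _ fun p => sq_nonneg _)).symm
    have e4 : ∫ p, fxy p.1 p.2 ^ 2 ∂ρ = R := by
      have h5 : ∫ p, fxy p.1 p.2 ^ 2 ∂ρ
          = ∫ t in Set.Ioc a b, ∫ s in Set.Ioc c d, fxy t s ^ 2 := by
        rw [hρdef] at hInt ⊢
        exact integral_prod _ hInt
      have h6 : ∫ t in Set.Ioc a b, ∫ s in Set.Ioc c d, fxy t s ^ 2
          = ∫ s in Set.Ioc c d, ∫ t in Set.Ioc a b, fxy t s ^ 2 := by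
        rw [hρdef] at hInt
        exact integral_integral_swap hInt
      rw [h5, h6, hR, intervalIntegral.integral_of_le hcd']
      simp_rw [intervalIntegral.integral_of_le hab']
    rw [e1, e2, e3, e4]
  have main : ENNReal.ofReal (∫ y in c..d, ∫ x in a..b, f x y ^ 2)
      ≤ C1 * (C2 * ENNReal.ofReal R) := by
    have hGmono : Monotone (fun y => ∫⁻ x in Set.Ioc a b, (∫⁻ t in Set.Ioc a x, Ψ t y) ^ 2) := by
      intro y1 y2 h12
      apply lintegral_mono
      intro x
      apply pow_le_pow_left'
      apply lintegral_mono
      intro t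
      exact lintegral_mono_set (Set.Ioc_subset_Ioc_right h12)
    calc ENNReal.ofReal (∫ y in c..d, ∫ x in a..b, f x y ^ 2)
        = ENNReal.ofReal (∫ y in Set.Ioc c d, ∫ x in a..b, f x y ^ 2) := by
          rw [intervalIntegral.integral_of_le hcd']
      _ ≤ ∫⁻ y in Set.Ioc c d, ENNReal.ofReal (∫ x in a..b, f x y ^ 2) := ofReal_int_le' _ _
      _ ≤ ∫⁻ y in Set.Ioc c d, ∫⁻ x in Set.Ioc a b, (∫⁻ t in Set.Ioc a x, Ψ t y) ^ 2 := by
          apply setLIntegral_mono hGmono.measurable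
          intro y hy
          calc ENNReal.ofReal (∫ x in a..b, f x y ^ 2)
              = ENNReal.ofReal (∫ x in Set.Ioc a b, f x y ^ 2) := by
                rw [intervalIntegral.integral_of_le hab']
            _ ≤ ∫⁻ x in Set.Ioc a b, ENNReal.ofReal (f x y ^ 2) := ofReal_int_le' _ _
            _ ≤ ∫⁻ x in Set.Ioc a b, (∫⁻ t in Set.Ioc a x, Ψ t y) ^ 2 := by
                have hmono : Monotone (fun x => (∫⁻ t in Set.Ioc a x, Ψ t y) ^ 2) := by
                  intro x1 x2 h12
                  exact pow_le_pow_left' (lintegral_mono_set (Set.Ioc_subset_Ioc_right h12)) 2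
                apply setLIntegral_mono hmono.measurable
                intro x hx
                exact key_bound x ⟨le_of_lt hx.1, hx.2⟩ y ⟨le_of_lt hy.1, hy.2⟩
      _ ≤ ∫⁻ y in Set.Ioc c d, C1 * ∫⁻ t in Set.Ioc a b, Ψ t y ^ 2 := by
          apply lintegral_mono
          intro y
          exact lw_aux' a b hab (fun t => Ψ t y) (hΨt y)
      _ = C1 * ∫⁻ y in Set.Ioc c d, ∫⁻ t in Set.Ioc a b, Ψ t y ^ 2 :=
          lintegral_const_mul' _ _ ENNReal.ofReal_ne_top
      _ = C1 * ∫⁻ t in Set.Ioc a b, ∫⁻ y in Set.Ioc c d, Ψ t y ^ 2 := by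
          congr 1
          apply lintegral_lintegral_swap
          exact ((hΨunc.comp measurable_swap).pow_const 2).aemeasurable
      _ ≤ C1 * ∫⁻ t in Set.Ioc a b, C2 * ∫⁻ s in Set.Ioc c d, ψ (t, s) ^ 2 := by
          apply mul_le_mul_right
          apply lintegral_mono
          intro t
          exact lw_aux' c d hcd (fun s => ψ (t, s)) (hψt t)
      _ = C1 * (C2 * ∫⁻ t in Set.Ioc a b, ∫⁻ s in Set.Ioc c d, ψ (t, s) ^ 2) := by
          rw [lintegral_const_mul' _ _ ENNReal.ofReal_ne_top]
      _ = C1 * (C2 * ENNReal.ofReal R) := by rw [hT]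
  have hfinal : (∫ y in c..d, ∫ x in a..b, f x y ^ 2) ≤
      (2*(b-a)/π)^2 * ((2*(d-c)/π)^2 * R) := by
    have h := main
    rw [hC1, hC2, ← ENNReal.ofReal_mul (by positivity : (0:ℝ) ≤ (2*(d-c)/π)^2),
      ← ENNReal.ofReal_mul (by positivity : (0:ℝ) ≤ (2*(b-a)/π)^2)] at h
    exact (ENNReal.ofReal_le_ofReal_iff
      (mul_nonneg (by positivity) (mul_nonneg (by positivity) hR_nonneg))).mp h
  calc (∫ y in c..d, ∫ x in a..b, f x y ^ 2)
      ≤ (2*(b-a)/π)^2 * ((2*(d-c)/π)^2 * R) := hfinal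
    _ = 16 / π ^ 4 * (b - a) ^ 2 * (d - c) ^ 2 * R := by
        field_simp
        ring
end

section
/- Let $f:[a,b]\times[c,d]\to\mathbb{R}$ be absolutely continuous with square-integrable mixed second partial derivative $f_{xy}$, vanishing together with $f_x$ and $f_y$ on the boundary edges $x=b$ and $y=d$ (i.e., $f(b,\cdot)=f(\cdot,d)=0$, $f_x(b,\cdot)=f_x(\cdot,d)=0$, $f_y(b,\cdot)=f_y(\cdot,d)=0$). Then $\int_c^d\int_a^b f^2(x,y)\,dx\,dy \le \frac{16}{\pi^4}(b-a)^2(d-c)^2 \int_c^d\int_a^b f_{xy}^2(x,y)\,dx\,dy$. -/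
open MeasureTheory Real ENNReal Set

lemma lintegral_sq_cs {α : Type*} [MeasurableSpace α] (μ : Measure α)
    {φ ψ : α → ℝ≥0∞} (hφ : AEMeasurable φ μ) (hψ : AEMeasurable ψ μ) :
    (∫⁻ x, φ x * ψ x ∂μ) ^ 2 ≤ (∫⁻ x, (φ x) ^ 2 ∂μ) * (∫⁻ x, (ψ x) ^ 2 ∂μ) := by
  have hpq : Real.HolderConjugate 2 2 := by constructor <;> norm_num
  have key := ENNReal.lintegral_mul_le_Lp_mul_Lq μ hpq hφ hψ
  have e1 : ∀ (f : α → ℝ≥0∞), (∫⁻ a, f a ^ (2:ℝ) ∂μ) = ∫⁻ a, (f a) ^ 2 ∂μ := by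
    intro f; apply lintegral_congr; intro x
    rw [← ENNReal.rpow_natCast (f x) 2]; norm_num
  rw [e1, e1] at key
  calc (∫⁻ x, φ x * ψ x ∂μ) ^ 2
      ≤ ((∫⁻ a, (φ a) ^ 2 ∂μ) ^ (1/2:ℝ) * (∫⁻ a, (ψ a) ^ 2 ∂μ) ^ (1/2:ℝ)) ^ 2 := by
        gcongr; exact key
    _ = (∫⁻ x, (φ x) ^ 2 ∂μ) * (∫⁻ x, (ψ x) ^ 2 ∂μ) := by
        rw [mul_pow, ← ENNReal.rpow_natCast (_ ^ (1/2:ℝ)) 2, ← ENNReal.rpow_natCast (_ ^ (1/2:ℝ)) 2,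
          ← ENNReal.rpow_mul, ← ENNReal.rpow_mul]
        norm_num

lemma integral_sin_aff (k x y A : ℝ) (hk : k ≠ 0) :
    ∫ t in x..y, sin (k*(t-A)) = k⁻¹ * (cos (k*(x-A)) - cos (k*(y-A))) := by
  have : ∀ t : ℝ, k*(t-A) = k*t - k*A := by intro t; ring
  simp only [this]
  rw [intervalIntegral.integral_comp_mul_sub Real.sin hk (k*A), integral_sin]
  simp [smul_eq_mul]

lemma integral_cos_aff (k x y A : ℝ) (hk : k ≠ 0) :
    ∫ t in x..y, cos (k*(t-A)) = k⁻¹ * (sin (k*(y-A)) - sin (k*(x-A))) := by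
  have : ∀ t : ℝ, k*(t-A) = k*t - k*A := by intro t; ring
  simp only [this]
  rw [intervalIntegral.integral_comp_mul_sub Real.cos hk (k*A), integral_cos]
  simp [smul_eq_mul]

lemma core1D (a b : ℝ) (hab : a < b) (h : ℝ → ℝ≥0∞) (hh : Measurable h) :
    ∫⁻ x in Ioc a b, (∫⁻ t in Ioc x b, h t) ^ 2 ≤
      ENNReal.ofReal (4 * (b-a)^2 / π^2) * ∫⁻ t in Ioc a b, (h t)^2 := by
  have hL : 0 < b - a := by linarith
  set k : ℝ := π / (2*(b-a)) with hk_def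
  have hkpos : 0 < k := div_pos Real.pi_pos (by linarith)
  have hk : k ≠ 0 := ne_of_gt hkpos
  have hkb : k * (b - a) = π/2 := by
    rw [hk_def]; field_simp
  set u : ℝ → ℝ := fun t => Real.sin (k*(t-a)) with hu_def
  have hu_cont : Continuous u := by fun_prop
  set U : ℝ → ℝ≥0∞ := fun t => ENNReal.ofReal (u t) with hU_def
  have hU_meas : Measurable U := (ENNReal.measurable_ofReal).comp hu_cont.measurable
  have harg : ∀ t : ℝ, a ≤ t → t ≤ b → k*(t-a) ∈ Icc 0 (π/2) := by
    intro t h1 h2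
    constructor
    · exact mul_nonneg hkpos.le (by linarith)
    · rw [← hkb]; nlinarith
  have hu_nonneg : ∀ t ∈ Icc a b, 0 ≤ u t := by
    intro t ht
    have := harg t ht.1 ht.2
    exact Real.sin_nonneg_of_nonneg_of_le_pi this.1 (by nlinarith [this.2, Real.pi_pos])
  have hu_pos : ∀ t ∈ Ioc a b, 0 < u t := by
    intro t ht
    have h2 := (harg t ht.1.le ht.2).2
    apply Real.sin_pos_of_pos_of_lt_pi
    · exact mul_pos hkpos (by linarith [ht.1])
    · nlinarith [Real.pi_pos]
  have hU_ne : ∀ t ∈ Ioc a b, U t ≠ 0 ∧ U t ≠ ∞ := by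
    intro t ht
    exact ⟨(ENNReal.ofReal_pos.2 (hu_pos t ht)).ne', ENNReal.ofReal_ne_top⟩
  set W : ℝ → ℝ≥0∞ := fun x => ENNReal.ofReal (k⁻¹ * Real.cos (k*(x-a))) with hW_def
  have hW_meas : Measurable W := by
    apply ENNReal.measurable_ofReal.comp
    fun_prop
  -- first 1D integral computation
  have hW1 : ∀ x ∈ Icc a b, ∫⁻ t in Ioc x b, U t = W x := by
    intro x hx
    rw [hU_def, ← ofReal_integral_eq_lintegral_ofReal (hu_cont.integrableOn_Ioc)
      ((ae_restrict_iff' measurableSet_Ioc).2 (Filter.Eventually.of_forall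
        (fun t ht => hu_nonneg t ⟨le_trans hx.1 ht.1.le, ht.2⟩)))]
    rw [hW_def, ← intervalIntegral.integral_of_le hx.2, hu_def]
    congr 1
    rw [integral_sin_aff k x b a hk]
    have : k * (b - a) = π/2 := hkb
    rw [this, Real.cos_pi_div_two]
    ring
  -- second 1D integral computation
  have hW2 : ∀ t ∈ Ioc a b, ∫⁻ x in Ioo a t, W x = ENNReal.ofReal (k⁻¹ * k⁻¹) * U t := by
    intro t ht
    have hcos_nn : ∀ x ∈ Icc a t, 0 ≤ k⁻¹ * Real.cos (k*(x-a)) := by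
      intro x hx
      have := harg x hx.1 (le_trans hx.2 ht.2)
      have hc : 0 ≤ Real.cos (k*(x-a)) :=
        Real.cos_nonneg_of_mem_Icc ⟨by linarith [this.1, Real.pi_pos], this.2⟩
      positivity
    rw [hW_def, ← ofReal_integral_eq_lintegral_ofReal]
    · rw [← MeasureTheory.integral_Ioc_eq_integral_Ioo, ← intervalIntegral.integral_of_le ht.1.le]
      have : (∫ x in a..t, k⁻¹ * Real.cos (k*(x-a))) = k⁻¹ * (k⁻¹ * (u t - 0)) := by
        rw [intervalIntegral.integral_const_mul, integral_cos_aff k a t a hk]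
        simp [hu_def]
      rw [this]
      rw [← ENNReal.ofReal_mul (by positivity)]
      congr 1
      ring
    · have hc : Continuous fun x => k⁻¹ * Real.cos (k*(x-a)) := by fun_prop
      exact (hc.integrableOn_Ioc).mono_set Ioo_subset_Ioc_self
    · exact (ae_restrict_iff' measurableSet_Ioo).2 (Filter.Eventually.of_forall
        (fun x hx => hcos_nn x ⟨hx.1.le, hx.2.le⟩))
  set F : ℝ → ℝ≥0∞ := fun t => (h t)^2 * (U t)⁻¹ with hF_def
  have hF_meas : Measurable F := ((hh.pow_const 2).mul hU_meas.inv)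
  -- pointwise Cauchy-Schwarz
  have step : ∀ x ∈ Ioc a b, (∫⁻ t in Ioc x b, h t)^2 ≤ W x * ∫⁻ t in Ioc x b, F t := by
    intro x hx
    have hsub : Ioc x b ⊆ Ioc a b := Ioc_subset_Ioc_left hx.1.le
    have heq : ∫⁻ t in Ioc x b, h t
        = ∫⁻ t in Ioc x b, (U t ^ (2⁻¹:ℝ)) * (h t * U t ^ (-(2⁻¹):ℝ)) := by
      apply setLIntegral_congr_fun measurableSet_Ioc
      intro t ht
      beta_reduce
      obtain ⟨h0, htop⟩ := hU_ne t (hsub ht)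
      rw [show (U t ^ (2⁻¹:ℝ)) * (h t * U t ^ (-(2⁻¹):ℝ))
          = h t * (U t ^ (2⁻¹:ℝ) * U t ^ (-(2⁻¹):ℝ)) by ring]
      rw [← ENNReal.rpow_add _ _ h0 htop]
      norm_num
    rw [heq]
    have cs := lintegral_sq_cs (volume.restrict (Ioc x b))
      (φ := fun t => U t ^ (2⁻¹:ℝ)) (ψ := fun t => h t * U t ^ (-(2⁻¹):ℝ))
      ((hU_meas.pow_const _).aemeasurable) ((hh.mul (hU_meas.pow_const _)).aemeasurable)
    refine le_trans cs (le_of_eq ?_)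
    congr 1
    · rw [← hW1 x ⟨hx.1.le, hx.2⟩]
      apply lintegral_congr
      intro t
      rw [← ENNReal.rpow_natCast (U t ^ (2⁻¹:ℝ)) 2, ← ENNReal.rpow_mul]
      norm_num
    · apply lintegral_congr
      intro t
      rw [mul_pow, ← ENNReal.rpow_natCast (U t ^ (-(2⁻¹):ℝ)) 2, ← ENNReal.rpow_mul, hF_def]
      norm_num [ENNReal.rpow_neg_one]
  -- assemble
  calc ∫⁻ x in Ioc a b, (∫⁻ t in Ioc x b, h t) ^ 2
      ≤ ∫⁻ x in Ioc a b, W x * ∫⁻ t in Ioc x b, F t :=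
        lintegral_mono_ae ((ae_restrict_iff' measurableSet_Ioc).2
          (Filter.Eventually.of_forall step))
    _ = ∫⁻ x in Ioc a b, ∫⁻ t in Ioc a b, W x * (Ioi x).indicator F t := by
        apply setLIntegral_congr_fun measurableSet_Ioc
        intro x hx
        beta_reduce
        rw [lintegral_const_mul _ (hF_meas.indicator measurableSet_Ioi)]
        congr 1
        rw [lintegral_indicator measurableSet_Ioi, Measure.restrict_restrict measurableSet_Ioi]
        congr 1
        rw [show Ioi x ∩ Ioc a b = Ioc x b from by
          ext s; simp only [mem_inter_iff, mem_Ioi, mem_Ioc]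
          exact ⟨fun ⟨h1,_,h3⟩ => ⟨h1,h3⟩, fun ⟨h1,h2⟩ => ⟨h1, hx.1.trans h1, h2⟩⟩]
    _ = ∫⁻ t in Ioc a b, ∫⁻ x in Ioc a b, W x * (Ioi x).indicator F t := by
        apply lintegral_lintegral_swap
        have heq : (Function.uncurry fun x t => W x * (Ioi x).indicator F t)
            = fun p : ℝ × ℝ => W p.1 * ({q : ℝ × ℝ | q.1 < q.2}.indicator (fun q => F q.2) p) := by
          funext p
          by_cases hp : p.1 < p.2 <;>
            simp [Function.uncurry, Set.indicator_apply, hp]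
        rw [heq]
        exact ((hW_meas.comp measurable_fst).mul ((hF_meas.comp measurable_snd).indicator
          (measurableSet_lt measurable_fst measurable_snd))).aemeasurable
    _ = ∫⁻ t in Ioc a b, (∫⁻ x in Ioo a t, W x) * F t := by
        apply setLIntegral_congr_fun measurableSet_Ioc
        intro t ht
        have e1 : ∀ x : ℝ, W x * (Ioi x).indicator F t = (Iio t).indicator (fun x => W x * F t) x := by
          intro x; by_cases hp : x < t <;> simp [Set.indicator_apply, hp]
        simp only [e1]
        rw [lintegral_indicator measurableSet_Iio, Measure.restrict_restrict measurableSet_Iio]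
        rw [show Iio t ∩ Ioc a b = Ioo a t from by
          ext s; simp only [mem_inter_iff, mem_Iio, mem_Ioc, mem_Ioo]
          exact ⟨fun ⟨h1,h2,_⟩ => ⟨h2,h1⟩, fun ⟨h1,h2⟩ => ⟨h2,h1, h2.le.trans ht.2⟩⟩]
        exact lintegral_mul_const _ hW_meas
    _ = ∫⁻ t in Ioc a b, ENNReal.ofReal (k⁻¹ * k⁻¹) * (h t)^2 := by
        apply setLIntegral_congr_fun measurableSet_Ioc
        intro t ht
        beta_reduce
        rw [hW2 t ht]
        obtain ⟨h0, htop⟩ := hU_ne t ht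
        have e2 : U t * (h t ^ 2 * (U t)⁻¹) = h t ^2 * (U t * (U t)⁻¹) := by ring
        rw [mul_assoc, e2, ENNReal.mul_inv_cancel h0 htop, mul_one]
    _ = ENNReal.ofReal (4 * (b-a)^2 / π^2) * ∫⁻ t in Ioc a b, (h t)^2 := by
        rw [lintegral_const_mul _ (hh.pow_const 2)]
        congr 2
        rw [hk_def]
        field_simp
        ring

lemma ofReal_integral_le {α : Type*} [MeasurableSpace α] (μ : Measure α) (φ : α → ℝ)
    (hnn : 0 ≤ᵐ[μ] φ) :
    ENNReal.ofReal (∫ x, φ x ∂μ) ≤ ∫⁻ x, ENNReal.ofReal (φ x) ∂μ := by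
  by_cases hint : Integrable φ μ
  · rw [ofReal_integral_eq_lintegral_ofReal hint hnn]
  · rw [integral_undef hint]; simp

set_option maxHeartbeats 1000000 in
lemma core2D (a b c d : ℝ) (hab : a < b) (hcd : c < d) (g : ℝ → ℝ → ℝ≥0∞)
    (hg : Measurable (Function.uncurry g)) :
    ∫⁻ y in Ioc c d, ∫⁻ x in Ioc a b, (∫⁻ t in Ioc x b, ∫⁻ s in Ioc y d, g t s) ^ 2
      ≤ (ENNReal.ofReal (4*(b-a)^2/π^2) * ENNReal.ofReal (4*(d-c)^2/π^2)) *
        ∫⁻ t in Ioc a b, ∫⁻ s in Ioc c d, (g t s)^2 := by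
  have hsec : ∀ t, Measurable (g t) := fun t => hg.comp measurable_prodMk_left
  have hH : Measurable (fun q : ℝ × ℝ => ∫⁻ s in Ioc q.1 d, g q.2 s) := by
    have e : ∀ q : ℝ × ℝ, (∫⁻ s in Ioc q.1 d, g q.2 s)
        = ∫⁻ s, ({r : (ℝ×ℝ)×ℝ | r.1.1 < r.2 ∧ r.2 ≤ d}.indicator
            (fun r => g r.1.2 r.2)) (q, s) := by
      intro q
      rw [← lintegral_indicator measurableSet_Ioc]
      apply lintegral_congr
      intro s
      by_cases hs : q.1 < s ∧ s ≤ d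
      · simp [Set.indicator_apply, hs, Set.mem_Ioc]
      · simp [Set.indicator_apply, hs, Set.mem_Ioc]
    simp only [e]
    apply Measurable.lintegral_prod_right'
    apply Measurable.indicator
    · exact hg.comp ((measurable_fst.snd).prodMk measurable_snd)
    · exact (measurableSet_lt (measurable_fst.fst) measurable_snd).inter
        (measurableSet_le measurable_snd measurable_const)
  have hH2 : Measurable (fun q : ℝ × ℝ => (∫⁻ s in Ioc q.1 d, g q.2 s)^2) := hH.pow_const 2
  have hinner2 : Measurable (fun y : ℝ => ∫⁻ t in Ioc a b, (∫⁻ s in Ioc y d, g t s)^2) := by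
    exact Measurable.lintegral_prod_right' (f := fun q : ℝ × ℝ => (∫⁻ s in Ioc q.1 d, g q.2 s)^2) hH2
  have hgt2 : Measurable (fun t : ℝ => ∫⁻ s in Ioc c d, (g t s)^2) := by
    exact Measurable.lintegral_prod_right' (f := fun p : ℝ × ℝ => (g p.1 p.2)^2)
      ((hg.comp (measurable_fst.prodMk measurable_snd)).pow_const 2)
  calc ∫⁻ y in Ioc c d, ∫⁻ x in Ioc a b, (∫⁻ t in Ioc x b, ∫⁻ s in Ioc y d, g t s) ^ 2
      ≤ ∫⁻ y in Ioc c d, ENNReal.ofReal (4*(b-a)^2/π^2)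
          * ∫⁻ t in Ioc a b, (∫⁻ s in Ioc y d, g t s)^2 := by
        apply lintegral_mono
        intro y
        have hy : Measurable fun t => ∫⁻ s in Ioc y d, g t s :=
          Measurable.lintegral_prod_right' (f := fun p : ℝ × ℝ => g p.1 p.2)
            (hg.comp (measurable_fst.prodMk measurable_snd))
        exact core1D a b hab _ hy
    _ = ENNReal.ofReal (4*(b-a)^2/π^2)
          * ∫⁻ y in Ioc c d, ∫⁻ t in Ioc a b, (∫⁻ s in Ioc y d, g t s)^2 :=
        lintegral_const_mul _ hinner2
    _ = ENNReal.ofReal (4*(b-a)^2/π^2)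
          * ∫⁻ t in Ioc a b, ∫⁻ y in Ioc c d, (∫⁻ s in Ioc y d, g t s)^2 := by
        congr 1
        apply lintegral_lintegral_swap
        exact hH2.aemeasurable
    _ ≤ ENNReal.ofReal (4*(b-a)^2/π^2)
          * ∫⁻ t in Ioc a b, ENNReal.ofReal (4*(d-c)^2/π^2) * ∫⁻ s in Ioc c d, (g t s)^2 := by
        apply mul_le_mul_right
        apply lintegral_mono
        intro t
        exact core1D c d hcd (g t) (hsec t)
    _ = (ENNReal.ofReal (4*(b-a)^2/π^2) * ENNReal.ofReal (4*(d-c)^2/π^2)) *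
        ∫⁻ t in Ioc a b, ∫⁻ s in Ioc c d, (g t s)^2 := by
        rw [lintegral_const_mul _ hgt2, mul_assoc]

set_option maxHeartbeats 1000000 in
theorem wirtinger_double_integral_upper_corner
    (a b c d : ℝ) (hab : a < b) (hcd : c < d)
    (f fxy : ℝ → ℝ → ℝ)
    (hrep : ∀ x ∈ Set.Icc a b, ∀ y ∈ Set.Icc c d,
      f x y = ∫ t in x..b, ∫ s in y..d, fxy t s)
    (hL2 : IntegrableOn (fun p : ℝ × ℝ => (fxy p.1 p.2) ^ 2)
      (Set.Icc a b ×ˢ Set.Icc c d)) :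
    (∫ y in c..d, ∫ x in a..b, (f x y) ^ 2) ≤
      16 / π ^ 4 * (b - a) ^ 2 * (d - c) ^ 2 *
        ∫ y in c..d, ∫ x in a..b, (fxy x y) ^ 2 := by
  have hpi := Real.pi_pos
  have hsm : AEStronglyMeasurable (fun p : ℝ × ℝ => fxy p.1 p.2 ^ 2)
      (volume.restrict (Set.Icc a b ×ˢ Set.Icc c d)) := hL2.aestronglyMeasurable
  set g2 : ℝ × ℝ → ℝ := hsm.mk _ with hg2def
  have hg2m : StronglyMeasurable g2 := hsm.stronglyMeasurable_mk
  have hg2e : (fun p : ℝ × ℝ => fxy p.1 p.2 ^ 2)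
      =ᵐ[volume.restrict (Set.Icc a b ×ˢ Set.Icc c d)] g2 := hsm.ae_eq_mk
  set G : ℝ → ℝ → ℝ := fun t s => Real.sqrt (g2 (t, s)) with hGdef
  have hGm : Measurable (Function.uncurry G) :=
    Real.continuous_sqrt.measurable.comp hg2m.measurable
  have hGnn : ∀ t s, 0 ≤ G t s := fun t s => Real.sqrt_nonneg _
  have hRprod : volume.restrict (Set.Icc a b ×ˢ Set.Icc c d)
      = (volume.restrict (Set.Icc a b)).prod (volume.restrict (Set.Icc c d)) := by
    rw [Measure.prod_restrict, ← Measure.volume_eq_prod]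
  have habs : (fun p : ℝ × ℝ => G p.1 p.2)
      =ᵐ[volume.restrict (Set.Icc a b ×ˢ Set.Icc c d)] (fun p => |fxy p.1 p.2|) := by
    filter_upwards [hg2e] with p hp
    show Real.sqrt (g2 (p.1, p.2)) = |fxy p.1 p.2|
    rw [show (p.1, p.2) = p from rfl, ← hp, Real.sqrt_sq_eq_abs]
  have habsP : (fun p : ℝ × ℝ => G p.1 p.2)
      =ᵐ[(volume.restrict (Set.Icc a b)).prod (volume.restrict (Set.Icc c d))]
        (fun p => |fxy p.1 p.2|) := by rwa [hRprod] at habs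
  have hsec1 : ∀ᵐ t ∂(volume.restrict (Set.Icc a b)),
      ∀ᵐ s ∂(volume.restrict (Set.Icc c d)), G t s = |fxy t s| :=
    Measure.ae_ae_of_ae_prod habsP
  have habs' : (fun q : ℝ × ℝ => G q.2 q.1)
      =ᵐ[(volume.restrict (Set.Icc c d)).prod (volume.restrict (Set.Icc a b))]
        (fun q => |fxy q.2 q.1|) :=
    Measure.measurePreserving_swap.quasiMeasurePreserving.ae habsP
  -- gE
  set gE : ℝ → ℝ → ℝ≥0∞ := fun t s => ENNReal.ofReal (G t s) with hgEdef
  have hgEm : Measurable (Function.uncurry gE) := ENNReal.measurable_ofReal.comp hGm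
  -- pointwise bound
  have key_t : ∀ y ∈ Set.Icc c d, ∀ᵐ t ∂(volume.restrict (Set.Icc a b)),
      ENNReal.ofReal |∫ s in y..d, fxy t s| ≤ ∫⁻ s in Ioc y d, gE t s := by
    intro y hy
    filter_upwards [hsec1] with t hts
    have h2 : |∫ s in y..d, fxy t s| ≤ ∫ s in Ioc y d, |fxy t s| := by
      have h1 := intervalIntegral.norm_integral_le_integral_norm
        (μ := volume) (f := fun s => fxy t s) hy.2
      rw [show (∫ s in y..d, ‖fxy t s‖) = ∫ s in Ioc y d, |fxy t s| from by
        rw [intervalIntegral.integral_of_le hy.2]; simp only [Real.norm_eq_abs]] at h1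
      rwa [Real.norm_eq_abs] at h1
    calc ENNReal.ofReal |∫ s in y..d, fxy t s|
        ≤ ENNReal.ofReal (∫ s in Ioc y d, |fxy t s|) := ENNReal.ofReal_le_ofReal h2
      _ ≤ ∫⁻ s in Ioc y d, ENNReal.ofReal |fxy t s| :=
          ofReal_integral_le _ _ (Filter.Eventually.of_forall fun s => abs_nonneg _)
      _ = ∫⁻ s in Ioc y d, gE t s := by
          apply lintegral_congr_ae
          have hts' : ∀ᵐ s ∂(volume.restrict (Ioc y d)), G t s = |fxy t s| :=
            ae_restrict_of_ae_restrict_of_subset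
              (Set.Ioc_subset_Icc_self.trans (Set.Icc_subset_Icc hy.1 le_rfl)) hts
          filter_upwards [hts'] with s hs
          rw [← hs]
  have hbound : ∀ x ∈ Set.Icc a b, ∀ y ∈ Set.Icc c d,
      ENNReal.ofReal ((f x y) ^ 2) ≤ (∫⁻ t in Ioc x b, ∫⁻ s in Ioc y d, gE t s) ^ 2 := by
    intro x hx y hy
    have habs_f : |f x y| ≤ ∫ t in Ioc x b, |∫ s in y..d, fxy t s| := by
      rw [hrep x hx y hy]
      have h1 := intervalIntegral.norm_integral_le_integral_norm
        (μ := volume) (f := fun t => ∫ s in y..d, fxy t s) hx.2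
      rw [show (∫ t in x..b, ‖∫ s in y..d, fxy t s‖) = ∫ t in Ioc x b, |∫ s in y..d, fxy t s| from by
        rw [intervalIntegral.integral_of_le hx.2]; simp only [Real.norm_eq_abs]] at h1
      rwa [Real.norm_eq_abs] at h1
    have h1 : ENNReal.ofReal |f x y| ≤ ∫⁻ t in Ioc x b, ∫⁻ s in Ioc y d, gE t s := by
      calc ENNReal.ofReal |f x y|
          ≤ ENNReal.ofReal (∫ t in Ioc x b, |∫ s in y..d, fxy t s|) :=
            ENNReal.ofReal_le_ofReal habs_f
        _ ≤ ∫⁻ t in Ioc x b, ENNReal.ofReal |∫ s in y..d, fxy t s| :=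
            ofReal_integral_le _ _ (Filter.Eventually.of_forall fun t => abs_nonneg _)
        _ ≤ ∫⁻ t in Ioc x b, ∫⁻ s in Ioc y d, gE t s :=
            lintegral_mono_ae (ae_restrict_of_ae_restrict_of_subset
              (Set.Ioc_subset_Icc_self.trans (Set.Icc_subset_Icc hx.1 le_rfl)) (key_t y hy))
    calc ENNReal.ofReal ((f x y) ^ 2)
        = (ENNReal.ofReal |f x y|) ^ 2 := by
          rw [← ENNReal.ofReal_pow (abs_nonneg _), sq_abs]
      _ ≤ (∫⁻ t in Ioc x b, ∫⁻ s in Ioc y d, gE t s) ^ 2 := pow_le_pow_left' h1 2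
  -- LHS chain
  have hLHS : ENNReal.ofReal (∫ y in c..d, ∫ x in a..b, (f x y) ^ 2)
      ≤ ∫⁻ y in Ioc c d, ∫⁻ x in Ioc a b,
          (∫⁻ t in Ioc x b, ∫⁻ s in Ioc y d, gE t s) ^ 2 := by
    rw [intervalIntegral.integral_of_le hcd.le]
    calc ENNReal.ofReal (∫ y in Ioc c d, ∫ x in a..b, (f x y) ^ 2)
        ≤ ∫⁻ y in Ioc c d, ENNReal.ofReal (∫ x in a..b, (f x y) ^ 2) :=
          ofReal_integral_le _ _ (Filter.Eventually.of_forall fun y =>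
            intervalIntegral.integral_nonneg hab.le (fun x _ => sq_nonneg _))
      _ ≤ ∫⁻ y in Ioc c d, ∫⁻ x in Ioc a b,
            (∫⁻ t in Ioc x b, ∫⁻ s in Ioc y d, gE t s) ^ 2 := by
          apply lintegral_mono_ae
          refine (ae_restrict_iff' measurableSet_Ioc).2 (Filter.Eventually.of_forall ?_)
          intro y hyIoc
          have hy : y ∈ Set.Icc c d := ⟨hyIoc.1.le, hyIoc.2⟩
          calc ENNReal.ofReal (∫ x in a..b, (f x y) ^ 2)
              = ENNReal.ofReal (∫ x in Ioc a b, (f x y) ^ 2) := by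
                rw [intervalIntegral.integral_of_le hab.le]
            _ ≤ ∫⁻ x in Ioc a b, ENNReal.ofReal ((f x y) ^ 2) :=
                ofReal_integral_le _ _ (Filter.Eventually.of_forall fun x => sq_nonneg _)
            _ ≤ ∫⁻ x in Ioc a b, (∫⁻ t in Ioc x b, ∫⁻ s in Ioc y d, gE t s) ^ 2 :=
                lintegral_mono_ae ((ae_restrict_iff' measurableSet_Ioc).2
                  (Filter.Eventually.of_forall fun x hx => hbound x ⟨hx.1.le, hx.2⟩ y hy))
  have core := core2D a b c d hab hcd gE hgEm
  -- RHS identification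
  have hprodR : (volume.restrict (Ioc c d)).prod (volume.restrict (Ioc a b))
      = volume.restrict (Ioc c d ×ˢ Ioc a b) := by
    rw [Measure.prod_restrict, ← Measure.volume_eq_prod]
  have hFint : Integrable (fun q : ℝ × ℝ => fxy q.2 q.1 ^ 2)
      ((volume.restrict (Ioc c d)).prod (volume.restrict (Ioc a b))) := by
    have h1 : IntegrableOn (fun p : ℝ × ℝ => fxy p.1 p.2 ^ 2) (Ioc a b ×ˢ Ioc c d) :=
      hL2.mono_set (Set.prod_mono Ioc_subset_Icc_self Ioc_subset_Icc_self)
    have h2 : Integrable (fun p : ℝ × ℝ => fxy p.1 p.2 ^ 2)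
        ((volume.restrict (Ioc a b)).prod (volume.restrict (Ioc c d))) := by
      rwa [Measure.prod_restrict, ← Measure.volume_eq_prod]
    exact (integrable_swap_iff.2 h2 : _)
  have hFae : (fun q : ℝ × ℝ => (gE q.2 q.1) ^ 2)
      =ᵐ[(volume.restrict (Ioc c d)).prod (volume.restrict (Ioc a b))]
        (fun q => ENNReal.ofReal (fxy q.2 q.1 ^ 2)) := by
    have hle : (volume.restrict (Ioc c d)).prod (volume.restrict (Ioc a b))
        ≤ (volume.restrict (Set.Icc c d)).prod (volume.restrict (Set.Icc a b)) := by
      rw [hprodR, Measure.prod_restrict, ← Measure.volume_eq_prod]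
      exact Measure.restrict_mono (Set.prod_mono Ioc_subset_Icc_self Ioc_subset_Icc_self) le_rfl
    filter_upwards [habs'.filter_mono (ae_mono hle)] with q hq
    rw [hgEdef]
    show (ENNReal.ofReal (G q.2 q.1)) ^ 2 = ENNReal.ofReal (fxy q.2 q.1 ^ 2)
    rw [← ENNReal.ofReal_pow (hGnn _ _), hq, sq_abs]
  have hX : (∫⁻ t in Ioc a b, ∫⁻ s in Ioc c d, (gE t s) ^ 2)
      = ENNReal.ofReal (∫ y in c..d, ∫ x in a..b, (fxy x y) ^ 2) := by
    have hswap : (∫⁻ t in Ioc a b, ∫⁻ s in Ioc c d, (gE t s) ^ 2)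
        = ∫⁻ s in Ioc c d, ∫⁻ t in Ioc a b, (gE t s) ^ 2 := by
      apply lintegral_lintegral_swap
      exact ((hgEm.pow_const 2).aemeasurable)
    rw [hswap]
    have hiter : (∫⁻ s in Ioc c d, ∫⁻ t in Ioc a b, (gE t s) ^ 2)
        = ∫⁻ q, (gE q.2 q.1) ^ 2
            ∂((volume.restrict (Ioc c d)).prod (volume.restrict (Ioc a b))) := by
      have hm : AEMeasurable (fun q : ℝ × ℝ => (gE q.2 q.1) ^ 2)
          ((volume.restrict (Ioc c d)).prod (volume.restrict (Ioc a b))) :=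
        ((hgEm.comp (measurable_snd.prodMk measurable_fst)).pow_const 2).aemeasurable
      exact (lintegral_prod _ hm).symm
    rw [hiter, lintegral_congr_ae hFae,
      ← ofReal_integral_eq_lintegral_ofReal hFint
        (Filter.Eventually.of_forall fun q => sq_nonneg _)]
    congr 1
    rw [MeasureTheory.integral_prod _ hFint, intervalIntegral.integral_of_le hcd.le]
    apply setIntegral_congr_fun measurableSet_Ioc
    intro s _
    show (∫ t in Ioc a b, fxy t s ^ 2) = ∫ x in a..b, fxy x s ^ 2
    rw [intervalIntegral.integral_of_le hab.le]
  -- final assembly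
  have hRHSnn : 0 ≤ ∫ y in c..d, ∫ x in a..b, (fxy x y) ^ 2 :=
    intervalIntegral.integral_nonneg hcd.le (fun y _ =>
      intervalIntegral.integral_nonneg hab.le (fun x _ => sq_nonneg _))
  have hLHSnn : 0 ≤ ∫ y in c..d, ∫ x in a..b, (f x y) ^ 2 :=
    intervalIntegral.integral_nonneg hcd.le (fun y _ =>
      intervalIntegral.integral_nonneg hab.le (fun x _ => sq_nonneg _))
  have hC1 : (0:ℝ) ≤ 4 * (b - a) ^ 2 / π ^ 2 := by positivity
  have hC2 : (0:ℝ) ≤ 4 * (d - c) ^ 2 / π ^ 2 := by positivity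
  have hfin : (ENNReal.ofReal (4 * (b - a) ^ 2 / π ^ 2)
      * ENNReal.ofReal (4 * (d - c) ^ 2 / π ^ 2))
      * (∫⁻ t in Ioc a b, ∫⁻ s in Ioc c d, (gE t s) ^ 2) ≠ ⊤ := by
    rw [hX]
    exact ENNReal.mul_ne_top (ENNReal.mul_ne_top ENNReal.ofReal_ne_top ENNReal.ofReal_ne_top)
      ENNReal.ofReal_ne_top
  calc (∫ y in c..d, ∫ x in a..b, (f x y) ^ 2)
      = (ENNReal.ofReal (∫ y in c..d, ∫ x in a..b, (f x y) ^ 2)).toReal :=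
        (ENNReal.toReal_ofReal hLHSnn).symm
    _ ≤ ((ENNReal.ofReal (4 * (b - a) ^ 2 / π ^ 2)
          * ENNReal.ofReal (4 * (d - c) ^ 2 / π ^ 2))
          * (∫⁻ t in Ioc a b, ∫⁻ s in Ioc c d, (gE t s) ^ 2)).toReal :=
        ENNReal.toReal_mono hfin (hLHS.trans core)
    _ = 16 / π ^ 4 * (b - a) ^ 2 * (d - c) ^ 2
          * ∫ y in c..d, ∫ x in a..b, (fxy x y) ^ 2 := by
        rw [hX, ← ENNReal.ofReal_mul hC1, ← ENNReal.ofReal_mul (by positivity),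
          ENNReal.toReal_ofReal (by positivity)]
        have hcst : 4 * (b - a) ^ 2 / π ^ 2 * (4 * (d - c) ^ 2 / π ^ 2)
            = 16 / π ^ 4 * (b - a) ^ 2 * (d - c) ^ 2 := by
          field_simp
          ring
        rw [hcst]
end

section
/- Let $g:[a,b]\times[c,d]\to\mathbb{R}$ be measurable with $\gamma \le g(x,y) \le \Gamma$ for all $(x,y)$, where $\gamma,\Gamma$ are real constants. Then $\int_c^d\int_a^b \left|g(x,y) - \frac{1}{\Delta}\int_c^d\int_a^b g(t,s)\,dt\,ds\right|^2 dx\,dy \le \frac{1}{4}(\Gamma-\gamma)^2\,\Delta$, where $\Delta=(b-a)(d-c)$. -/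
open MeasureTheory Real
lemma variance_bound {α : Type*} [MeasurableSpace α] (ν : Measure α) [IsFiniteMeasure ν]
    (γ Γ μ : ℝ) (f : α → ℝ) (hf : Integrable f ν)
    (hbd : ∀ᵐ p ∂ν, γ ≤ f p ∧ f p ≤ Γ)
    (hμ : μ * (ν Set.univ).toReal = ∫ q, f q ∂ν) :
    ∫ p, (f p - μ) ^ 2 ∂ν ≤ 1 / 4 * (Γ - γ) ^ 2 * (ν Set.univ).toReal := by
  set Δ := (ν Set.univ).toReal with hΔ
  have hΔ0 : 0 ≤ Δ := ENNReal.toReal_nonneg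
  set m : ℝ := (γ + Γ) / 2 with hm
  set c0 : ℝ := μ - m with hc0
  have h1 : Integrable (fun p => f p - m) ν := hf.sub (integrable_const m)
  have hb2 : ∀ᵐ p ∂ν, (f p - m) ^ 2 ≤ ((Γ - γ) / 2) ^ 2 := by
    filter_upwards [hbd] with p hp
    exact sq_le_sq' (by linarith [hp.1, hm]) (by linarith [hp.2, hm])
  have h2 : Integrable (fun p => (f p - m) ^ 2) ν := by
    refine Integrable.mono' (integrable_const (((Γ - γ) / 2) ^ 2)) ?_ ?_
    · exact (h1.aestronglyMeasurable.mul h1.aestronglyMeasurable).congr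
        (by filter_upwards with p; simp only [Pi.mul_apply]; ring)
    · filter_upwards [hb2] with p hp
      rw [Real.norm_eq_abs, abs_of_nonneg (sq_nonneg (f p - m))]; exact hp
  have key : (fun p => (f p - μ) ^ 2) = fun p => (f p - m) ^ 2 - (2 * c0) * (f p - m) + c0 ^ 2 := by
    funext p; simp only [hc0]; ring
  have hI : ∫ p, (f p - μ) ^ 2 ∂ν
      = (∫ p, (f p - m) ^ 2 ∂ν) - 2 * c0 * (∫ p, f p - m ∂ν) + Δ * c0 ^ 2 := by
    have e1 : ∫ p, ((f p - m) ^ 2 - 2 * c0 * (f p - m) + c0 ^ 2) ∂ν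
        = (∫ p, ((f p - m) ^ 2 - 2 * c0 * (f p - m)) ∂ν) + ∫ _, c0 ^ 2 ∂ν :=
      integral_add (h2.sub (h1.const_mul (2 * c0))) (integrable_const _)
    have e2 : ∫ p, ((f p - m) ^ 2 - 2 * c0 * (f p - m)) ∂ν
        = (∫ p, (f p - m) ^ 2 ∂ν) - ∫ p, 2 * c0 * (f p - m) ∂ν :=
      integral_sub h2 (h1.const_mul (2 * c0))
    have e3 : ∫ p, 2 * c0 * (f p - m) ∂ν = 2 * c0 * ∫ p, (f p - m) ∂ν :=
      MeasureTheory.integral_const_mul _ _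
    rw [key, e1, e2, e3, integral_const]
    simp only [smul_eq_mul, measureReal_def, ← hΔ]
    try ring
  have hB : ∫ p, f p - m ∂ν = Δ * c0 := by
    rw [integral_sub hf (integrable_const m), integral_const, ← hμ]
    simp [hc0, smul_eq_mul, hΔ, measureReal_def]; ring
  have hA : ∫ p, (f p - m) ^ 2 ∂ν ≤ 1 / 4 * (Γ - γ) ^ 2 * Δ := by
    calc ∫ p, (f p - m) ^ 2 ∂ν ≤ ∫ _, ((Γ - γ) / 2) ^ 2 ∂ν :=
          integral_mono_ae h2 (integrable_const _) hb2
      _ = 1 / 4 * (Γ - γ) ^ 2 * Δ := by rw [integral_const]; simp [smul_eq_mul, hΔ, measureReal_def]; ring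
  have : ∫ p, (f p - μ) ^ 2 ∂ν = (∫ p, (f p - m) ^ 2 ∂ν) - Δ * c0 ^ 2 := by
    rw [hI, hB]; ring
  nlinarith [mul_nonneg hΔ0 (sq_nonneg c0)]

theorem bounded_variance_gruss
    (a b c d γ Γ : ℝ) (hab : a < b) (hcd : c < d)
    (g : ℝ → ℝ → ℝ)
    (hmeas : Measurable fun p : ℝ × ℝ => g p.1 p.2)
    (hint : IntegrableOn (fun p : ℝ × ℝ => g p.1 p.2) (Set.Icc a b ×ˢ Set.Icc c d))
    (hbd : ∀ x ∈ Set.Icc a b, ∀ y ∈ Set.Icc c d, γ ≤ g x y ∧ g x y ≤ Γ) :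
    (∫ y in c..d, ∫ x in a..b,
        |g x y - (1 / ((b - a) * (d - c))) * ∫ s in c..d, ∫ t in a..b, g t s| ^ 2) ≤
      1 / 4 * (Γ - γ) ^ 2 * ((b - a) * (d - c)) := by
  have hba : 0 < b - a := by linarith
  have hdc : 0 < d - c := by linarith
  set ν : Measure (ℝ × ℝ) :=
    (volume.restrict (Set.Icc c d)).prod (volume.restrict (Set.Icc a b)) with hν
  haveI : IsFiniteMeasure (volume.restrict (Set.Icc c d)) :=
    ⟨by rw [Measure.restrict_apply_univ]; exact measure_Icc_lt_top⟩
  haveI : IsFiniteMeasure (volume.restrict (Set.Icc a b)) :=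
    ⟨by rw [Measure.restrict_apply_univ]; exact measure_Icc_lt_top⟩
  set f : ℝ × ℝ → ℝ := fun p => g p.2 p.1 with hf
  have hmeas' : Measurable f := hmeas.comp measurable_swap
  have hνr : ν = volume.restrict (Set.Icc c d ×ˢ Set.Icc a b) := by
    rw [hν, Measure.prod_restrict, ← Measure.volume_eq_prod]
  have hswap : MeasurePreserving Prod.swap ν
      ((volume.restrict (Set.Icc a b)).prod (volume.restrict (Set.Icc c d))) :=
    Measure.measurePreserving_swap
  have hint' : Integrable (fun p : ℝ × ℝ => g p.1 p.2)
      ((volume.restrict (Set.Icc a b)).prod (volume.restrict (Set.Icc c d))) := by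
    rwa [Measure.prod_restrict, ← Measure.volume_eq_prod]
  have hfi : Integrable f ν :=
    (hswap.integrable_comp hint'.aestronglyMeasurable).mpr hint'
  have hae : ∀ᵐ p ∂ν, γ ≤ f p ∧ f p ≤ Γ := by
    rw [hνr]
    filter_upwards [ae_restrict_mem ((measurableSet_Icc).prod measurableSet_Icc)] with p hp
    exact hbd p.2 hp.2 p.1 hp.1
  have hΔr : (ν Set.univ).toReal = (b - a) * (d - c) := by
    rw [hν, ← Set.univ_prod_univ, Measure.prod_prod, Measure.restrict_apply_univ,
      Measure.restrict_apply_univ, Real.volume_Icc, Real.volume_Icc, ← ENNReal.ofReal_mul hdc.le,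
      ENNReal.toReal_ofReal (by positivity)]
    ring
  have conv : ∀ h : ℝ → ℝ → ℝ, Integrable (fun p : ℝ × ℝ => h p.1 p.2) ν →
      (∫ y in c..d, ∫ x in a..b, h y x) = ∫ p, h p.1 p.2 ∂ν := by
    intro h hh
    rw [intervalIntegral.integral_of_le hcd.le, ← integral_Icc_eq_integral_Ioc]
    have e : ∀ y, (∫ x in a..b, h y x) = ∫ x in Set.Icc a b, h y x := fun y => by
      rw [intervalIntegral.integral_of_le hab.le, ← integral_Icc_eq_integral_Ioc]
    simp_rw [e]
    exact integral_integral hh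
  have hI : (∫ s in c..d, ∫ t in a..b, g t s) = ∫ p, f p ∂ν :=
    conv (fun s t => g t s) hfi
  set μ0 : ℝ := (1 / ((b - a) * (d - c))) * ∫ s in c..d, ∫ t in a..b, g t s with hμ0
  have hμeq : μ0 * (ν Set.univ).toReal = ∫ p, f p ∂ν := by
    rw [hΔr, ← hI, hμ0]
    field_simp
  have hqi : Integrable (fun p => (f p - μ0) ^ 2) ν := by
    refine Integrable.mono' (integrable_const ((|γ - μ0| + |Γ - μ0|) ^ 2)) ?_ ?_
    · exact ((hmeas'.sub measurable_const).pow_const 2).aestronglyMeasurable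
    · filter_upwards [hae] with p hp
      rw [Real.norm_eq_abs, abs_of_nonneg (sq_nonneg _), ← sq_abs]
      have h1 : f p - μ0 ≤ |γ - μ0| + |Γ - μ0| := by
        have := le_abs_self (Γ - μ0); have := abs_nonneg (γ - μ0); linarith [hp.2]
      have h2 : -(|γ - μ0| + |Γ - μ0|) ≤ f p - μ0 := by
        have := neg_abs_le (γ - μ0); have := abs_nonneg (Γ - μ0); linarith [hp.1]
      exact pow_le_pow_left₀ (abs_nonneg _) (abs_le.2 ⟨h2, h1⟩) 2
  have hL : (∫ y in c..d, ∫ x in a..b, |g x y - μ0| ^ 2) = ∫ p, (f p - μ0) ^ 2 ∂ν := by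
    have := conv (fun y x => |g x y - μ0| ^ 2) (by simpa [sq_abs] using hqi)
    simpa [sq_abs] using this
  calc (∫ y in c..d, ∫ x in a..b, |g x y - μ0| ^ 2) = ∫ p, (f p - μ0) ^ 2 ∂ν := hL
    _ ≤ 1 / 4 * (Γ - γ) ^ 2 * (ν Set.univ).toReal :=
        variance_bound ν γ Γ μ0 f hfi hae hμeq
    _ = 1 / 4 * (Γ - γ) ^ 2 * ((b - a) * (d - c)) := by rw [hΔr]
end

section
/- Let $f:[a,b]\times[c,d]\to\mathbb{R}$ be continuous with $L^2$ mixed second partial derivative, satisfying the hypotheses of the sharp pointwise double Wirtinger corollary. Then for all $(x,y)\in[a,b]\times[c,d]$: $\left|f(x,y)-\frac{1}{(b-a)(d-c)}\int_a^b\int_c^d f(t,s)\,ds\,dt\right| \le \frac{4}{\pi^2\Delta^{1/2}}\left[\frac{b-a}{2}+\left|x-\frac{a+b}{2}\right|\right]\left[\frac{d-c}{2}+\left|y-\frac{c+d}{2}\right|\right]\left\|\frac{\partial^2 f}{\partial t\partial s}\right\|_2$, where $\Delta=(b-a)(d-c)$. -/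
open MeasureTheory Real

private lemma rect_int {a b c d : ℝ} (hab : a ≤ b) (hcd : c ≤ d) (h : ℝ × ℝ → ℝ)
    (hi : IntegrableOn h (Set.Icc a b ×ˢ Set.Icc c d)) :
    ∫ p in Set.Icc a b ×ˢ Set.Icc c d, h p = ∫ t in a..b, ∫ s in c..d, h (t, s) := by
  have hrect : (volume : Measure (ℝ × ℝ)).restrict (Set.Icc a b ×ˢ Set.Icc c d)
      = (volume.restrict (Set.Icc a b)).prod (volume.restrict (Set.Icc c d)) := by
    rw [Measure.volume_eq_prod, Measure.prod_restrict]
  have hi' : Integrable h ((volume.restrict (Set.Icc a b)).prod (volume.restrict (Set.Icc c d))) := by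
    rwa [← hrect]
  calc ∫ p in Set.Icc a b ×ˢ Set.Icc c d, h p
      = ∫ p, h p ∂((volume.restrict (Set.Icc a b)).prod (volume.restrict (Set.Icc c d))) := by
        rw [hrect]
    _ = ∫ t, (∫ s, h (t, s) ∂(volume.restrict (Set.Icc c d))) ∂(volume.restrict (Set.Icc a b)) :=
        integral_prod h hi'
    _ = ∫ t in a..b, ∫ s in c..d, h (t, s) := by
        rw [intervalIntegral.integral_of_le hab, ← MeasureTheory.integral_Icc_eq_integral_Ioc]
        refine integral_congr_ae (Filter.Eventually.of_forall fun t => ?_)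
        show (∫ s in Set.Icc c d, h (t, s)) = ∫ s in c..d, h (t, s)
        rw [MeasureTheory.integral_Icc_eq_integral_Ioc, ← intervalIntegral.integral_of_le hcd]

private lemma rect_int_swap {a b c d : ℝ} (hab : a ≤ b) (hcd : c ≤ d) (h : ℝ × ℝ → ℝ)
    (hi : IntegrableOn h (Set.Icc a b ×ˢ Set.Icc c d)) :
    ∫ p in Set.Icc a b ×ˢ Set.Icc c d, h p = ∫ s in c..d, ∫ t in a..b, h (t, s) := by
  have hrect : (volume : Measure (ℝ × ℝ)).restrict (Set.Icc a b ×ˢ Set.Icc c d)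
      = (volume.restrict (Set.Icc a b)).prod (volume.restrict (Set.Icc c d)) := by
    rw [Measure.volume_eq_prod, Measure.prod_restrict]
  have hi' : Integrable h ((volume.restrict (Set.Icc a b)).prod (volume.restrict (Set.Icc c d))) := by
    rwa [← hrect]
  calc ∫ p in Set.Icc a b ×ˢ Set.Icc c d, h p
      = ∫ p, h p ∂((volume.restrict (Set.Icc a b)).prod (volume.restrict (Set.Icc c d))) := by
        rw [hrect]
    _ = ∫ s, (∫ t, h (t, s) ∂(volume.restrict (Set.Icc a b))) ∂(volume.restrict (Set.Icc c d)) :=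
        integral_prod_symm h hi'
    _ = ∫ s in c..d, ∫ t in a..b, h (t, s) := by
        rw [intervalIntegral.integral_of_le hcd, ← MeasureTheory.integral_Icc_eq_integral_Ioc]
        refine integral_congr_ae (Filter.Eventually.of_forall fun s => ?_)
        show (∫ t in Set.Icc a b, h (t, s)) = ∫ t in a..b, h (t, s)
        rw [MeasureTheory.integral_Icc_eq_integral_Ioc, ← intervalIntegral.integral_of_le hab]

set_option maxHeartbeats 1000000 in
theorem ostrowski_type_L2
    (a b c d : ℝ) (hab : a < b) (hcd : c < d)
    (f fxy : ℝ → ℝ → ℝ)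
    (hf : ContinuousOn (fun p : ℝ × ℝ => f p.1 p.2) (Set.Icc a b ×ˢ Set.Icc c d))
    (hL2 : IntegrableOn (fun p : ℝ × ℝ => (fxy p.1 p.2) ^ 2) (Set.Icc a b ×ˢ Set.Icc c d))
    (hwirt : ∀ x ∈ Set.Icc a b, ∀ y ∈ Set.Icc c d,
      (∫ s in c..d, ∫ t in a..b, |f t s - f x y| ^ 2) ≤
        16 / π ^ 4 * ((b - a) / 2 + |x - (a + b) / 2|) ^ 2 *
          ((d - c) / 2 + |y - (c + d) / 2|) ^ 2 *
          ∫ s in c..d, ∫ t in a..b, (fxy t s) ^ 2) :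
    ∀ x ∈ Set.Icc a b, ∀ y ∈ Set.Icc c d,
      |f x y - (1 / ((b - a) * (d - c))) * ∫ t in a..b, ∫ s in c..d, f t s| ≤
        4 / (π ^ 2 * Real.sqrt ((b - a) * (d - c))) *
          ((b - a) / 2 + |x - (a + b) / 2|) * ((d - c) / 2 + |y - (c + d) / 2|) *
          Real.sqrt (∫ s in c..d, ∫ t in a..b, (fxy t s) ^ 2) := by
  intro x hx y hy
  set K := Set.Icc a b ×ˢ Set.Icc c d with hKdef
  have hKc : IsCompact K := isCompact_Icc.prod isCompact_Icc
  set μ := (volume : Measure (ℝ × ℝ)).restrict K with hμdef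
  have hΔpos : 0 < (b - a) * (d - c) := mul_pos (by linarith) (by linarith)
  set Δ := (b - a) * (d - c) with hΔdef
  set M := f x y with hM
  set g : ℝ × ℝ → ℝ := fun p => f p.1 p.2 - M with hg
  set A := (b - a) / 2 + |x - (a + b) / 2| with hA
  set B := (d - c) / 2 + |y - (c + d) / 2| with hB
  have hAnn : 0 ≤ A := by rw [hA]; exact add_nonneg (by linarith) (abs_nonneg _)
  have hBnn : 0 ≤ B := by rw [hB]; exact add_nonneg (by linarith) (abs_nonneg _)
  set W := ∫ s in c..d, ∫ t in a..b, (fxy t s) ^ 2 with hW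
  have hWnn : 0 ≤ W := by
    refine intervalIntegral.integral_nonneg hcd.le fun s _ => ?_
    exact intervalIntegral.integral_nonneg hab.le fun t _ => sq_nonneg _
  -- volume of K
  have hvol : (volume K) = ENNReal.ofReal Δ := by
    rw [hKdef, Measure.volume_eq_prod, Measure.prod_prod, Real.volume_Icc, Real.volume_Icc,
      ← ENNReal.ofReal_mul (by linarith)]
  have hvolR : (volume K).toReal = Δ := by
    rw [hvol, ENNReal.toReal_ofReal hΔpos.le]
  haveI : IsFiniteMeasure μ := ⟨by rw [hμdef, Measure.restrict_apply_univ, hvol]; exact ENNReal.ofReal_lt_top⟩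
  -- integrability facts
  have hfi : IntegrableOn (fun p : ℝ × ℝ => f p.1 p.2) K := hf.integrableOn_compact hKc
  have hgi : IntegrableOn g K := by
    exact hfi.sub (integrableOn_const (by rw [hvol]; exact ENNReal.ofReal_ne_top))
  have hgc : ContinuousOn g K := hf.sub continuousOn_const
  have hg2i : IntegrableOn (fun p => g p ^ 2) K := (hgc.pow 2).integrableOn_compact hKc
  -- step 1 : the mean value identity
  have hIf : (∫ t in a..b, ∫ s in c..d, f t s) = (∫ p, g p ∂μ) + Δ * M := by
    have h1 : (∫ p, g p ∂μ) = (∫ p in K, f p.1 p.2) - Δ * M := by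
      rw [hμdef, integral_sub hfi (integrableOn_const (by rw [hvol]; exact ENNReal.ofReal_ne_top))]
      rw [setIntegral_const, measureReal_def, hvolR, smul_eq_mul]
    have h2 : (∫ p in K, f p.1 p.2) = ∫ t in a..b, ∫ s in c..d, f t s :=
      rect_int hab.le hcd.le _ hfi
    rw [h1, h2]; ring
  -- step 2 : Cauchy-Schwarz
  have hpq : (2:ℝ).HolderConjugate 2 := ⟨by norm_num, by norm_num, by norm_num⟩
  have h2e : ENNReal.ofReal (2:ℝ) = 2 := by norm_num
  have hgm : MemLp g (ENNReal.ofReal (2:ℝ)) μ := by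
    rw [h2e]
    exact (memLp_two_iff_integrable_sq hgi.aestronglyMeasurable).2 hg2i
  have h1m : MemLp (fun _ : ℝ × ℝ => (1:ℝ)) (ENNReal.ofReal (2:ℝ)) μ := by
    rw [h2e]; exact memLp_const 1
  have hCS := integral_mul_norm_le_Lp_mul_Lq hpq hgm h1m
  have hQ : (∫ p, ‖g p‖ ^ (2:ℝ) ∂μ) = ∫ p, g p ^ 2 ∂μ := by
    refine integral_congr_ae (Filter.Eventually.of_forall fun p => ?_)
    show ‖g p‖ ^ (2:ℝ) = g p ^ 2
    rw [show (2:ℝ) = ((2:ℕ):ℝ) by norm_num, Real.rpow_natCast, Real.norm_eq_abs, sq_abs]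
  have hone : (∫ _p : ℝ × ℝ, (1:ℝ) ∂μ) = Δ := by
    rw [integral_const, smul_eq_mul, mul_one, hμdef, measureReal_def, Measure.restrict_apply_univ, hvolR]
  have hCS' : (∫ p, ‖g p‖ ∂μ) ≤ Real.sqrt (∫ p, g p ^ 2 ∂μ) * Real.sqrt Δ := by
    have := hCS
    simp only [norm_one, mul_one, Real.one_rpow] at this
    rw [hQ, hone] at this
    calc (∫ p, ‖g p‖ ∂μ) ≤ (∫ p, g p ^ 2 ∂μ) ^ (1/(2:ℝ)) * Δ ^ (1/(2:ℝ)) := this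
      _ = Real.sqrt (∫ p, g p ^ 2 ∂μ) * Real.sqrt Δ := by
          rw [← Real.sqrt_eq_rpow, ← Real.sqrt_eq_rpow]
  have hJ : |∫ p, g p ∂μ| ≤ Real.sqrt (∫ p, g p ^ 2 ∂μ) * Real.sqrt Δ :=
    le_trans (by rw [← Real.norm_eq_abs]; exact norm_integral_le_integral_norm g) hCS'
  -- step 3 : Wirtinger bound on ∫ g²
  have hQW : (∫ p, g p ^ 2 ∂μ) ≤ 16 / π ^ 4 * A ^ 2 * B ^ 2 * W := by
    have h3 : (∫ p, g p ^ 2 ∂μ) = ∫ s in c..d, ∫ t in a..b, (f t s - M) ^ 2 := by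
      rw [hμdef]; exact rect_int_swap hab.le hcd.le _ hg2i
    have h4 := hwirt x hx y hy
    simp_rw [sq_abs] at h4
    rw [h3]; exact h4
  have hsq : Real.sqrt (∫ p, g p ^ 2 ∂μ) ≤ 4 / π ^ 2 * A * B * Real.sqrt W := by
    calc Real.sqrt (∫ p, g p ^ 2 ∂μ) ≤ Real.sqrt (16 / π ^ 4 * A ^ 2 * B ^ 2 * W) :=
          Real.sqrt_le_sqrt hQW
      _ = 4 / π ^ 2 * A * B * Real.sqrt W := by
          have hpi : (0:ℝ) < π ^ 2 := by positivity
          rw [show 16 / π ^ 4 * A ^ 2 * B ^ 2 = (4 / π ^ 2 * A * B) ^ 2 by ring,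
            Real.sqrt_mul (sq_nonneg _), Real.sqrt_sq (by positivity)]
  -- put it together
  have hkey : f x y - (1 / Δ) * (∫ t in a..b, ∫ s in c..d, f t s) = -(1/Δ) * ∫ p, g p ∂μ := by
    rw [hIf]; field_simp; rw [hM]; ring
  rw [hkey, abs_mul, abs_neg, abs_of_nonneg (by positivity : (0:ℝ) ≤ 1/Δ)]
  have hs : Real.sqrt Δ > 0 := Real.sqrt_pos.2 hΔpos
  calc 1/Δ * |∫ p, g p ∂μ| ≤ 1/Δ * (Real.sqrt (∫ p, g p ^ 2 ∂μ) * Real.sqrt Δ) := by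
        exact mul_le_mul_of_nonneg_left hJ (by positivity)
    _ ≤ 1/Δ * ((4 / π ^ 2 * A * B * Real.sqrt W) * Real.sqrt Δ) := by
        refine mul_le_mul_of_nonneg_left (mul_le_mul_of_nonneg_right hsq hs.le) (by positivity)
    _ = 4 / (π ^ 2 * Real.sqrt Δ) * A * B * Real.sqrt W := by
        have hsne : Real.sqrt Δ ≠ 0 := ne_of_gt hs
        have h1 : (1:ℝ)/Δ * Real.sqrt Δ = 1 / Real.sqrt Δ := by
          rw [div_mul_eq_mul_div, one_mul, div_eq_div_iff hΔpos.ne' hsne, one_mul,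
            Real.mul_self_sqrt hΔpos.le]
        calc 1/Δ * ((4 / π ^ 2 * A * B * Real.sqrt W) * Real.sqrt Δ)
            = (4 / π ^ 2 * A * B * Real.sqrt W) * (1/Δ * Real.sqrt Δ) := by ring
          _ = (4 / π ^ 2 * A * B * Real.sqrt W) * (1 / Real.sqrt Δ) := by rw [h1]
          _ = 4 / (π ^ 2 * Real.sqrt Δ) * A * B * Real.sqrt W := by
              rw [← div_div]; ring
end

section
/- Let $a<b$, $c<d$, $f(x,y)=\sin\left(\frac{\pi}{2}\cdot\frac{a+b-2x}{b-a}\right)\sin\left(\frac{\pi}{2}\cdot\frac{c+d-2y}{d-c}\right)$ and $g(x,y)=\operatorname{sgn}\left(x-\frac{a+b}{2}\right)\operatorname{sgn}\left(y-\frac{c+d}{2}\right)$. Then $\int_a^b\int_c^d g(t,s)\,ds\,dt = 0$ and $\int_a^b\int_c^d f(x,y)g(x,y)\,dy\,dx = \frac{4}{\pi^2}(b-a)(d-c)$. -/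
open MeasureTheory Real intervalIntegral

lemma sin_affine_int (a b c d : ℝ) (hc : c ≠ 0) :
    ∫ x in a..b, Real.sin (c * x + d) =
      (Real.cos (c * a + d) - Real.cos (c * b + d)) / c := by
  rw [intervalIntegral.integral_comp_mul_add Real.sin hc d, integral_sin, smul_eq_mul]
  field_simp

lemma step_int (F : ℝ → ℝ) (hF : Continuous F) (a b : ℝ) (hab : a < b) :
    ∫ x in a..b, F x * Real.sign (x - (a + b) / 2) =
      (∫ x in ((a + b) / 2)..b, F x) - ∫ x in a..(a + b) / 2, F x := by
  set m := (a + b) / 2 with hm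
  have ham : a ≤ m := by rw [hm]; linarith
  have hmb : m ≤ b := by rw [hm]; linarith
  have hnull : (volume ({m} : Set ℝ)) = 0 := measure_singleton m
  have hae := measure_eq_zero_iff_ae_notMem.mp hnull
  have h1 : ∀ᵐ x : ℝ, x ∈ Set.uIoc a m → F x * Real.sign (x - m) = -F x := by
    filter_upwards [hae] with x hx hxm
    rw [Set.uIoc_of_le ham] at hxm
    have : x < m := lt_of_le_of_ne hxm.2 (by simpa using hx)
    rw [Real.sign_of_neg (by linarith), mul_neg_one]
  have h2 : ∀ᵐ x : ℝ, x ∈ Set.uIoc m b → F x * Real.sign (x - m) = F x := by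
    filter_upwards with x hxm
    rw [Set.uIoc_of_le hmb] at hxm
    rw [Real.sign_of_pos (by linarith [hxm.1]), mul_one]
  have hint1 : IntervalIntegrable (fun x => F x * Real.sign (x - m)) volume a m := by
    rw [intervalIntegrable_iff]
    refine ((hF.neg.integrableOn_uIoc (a := a) (b := m))).congr ?_
    exact ((ae_restrict_iff' measurableSet_uIoc).mpr (h1.mono fun x hx h => (hx h).symm))
  have hint2 : IntervalIntegrable (fun x => F x * Real.sign (x - m)) volume m b := by
    rw [intervalIntegrable_iff]
    refine ((hF.integrableOn_uIoc (a := m) (b := b))).congr ?_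
    exact ((ae_restrict_iff' measurableSet_uIoc).mpr (h2.mono fun x hx h => (hx h).symm))
  rw [← intervalIntegral.integral_add_adjacent_intervals hint1 hint2,
    intervalIntegral.integral_congr_ae h1, intervalIntegral.integral_congr_ae h2,
    intervalIntegral.integral_neg]
  linarith

lemma sign_int (a b : ℝ) (hab : a < b) :
    ∫ x in a..b, Real.sign (x - (a + b) / 2) = 0 := by
  have h := step_int (fun _ => 1) continuous_const a b hab
  simp only [one_mul] at h
  rw [h]
  simp
  ring

lemma sin_sign_int (a b : ℝ) (hab : a < b) :
    ∫ x in a..b, Real.sin (π / 2 * ((a + b - 2 * x) / (b - a))) *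
      Real.sign (x - (a + b) / 2) = -(2 * (b - a) / π) := by
  have hL : b - a ≠ 0 := by linarith
  have hc : -(π / (b - a)) ≠ 0 := by
    simp [div_ne_zero Real.pi_ne_zero hL]
  have hF : Continuous fun x => Real.sin (-(π / (b - a)) * x + π * (a + b) / (2 * (b - a))) :=
    Real.continuous_sin.comp (by continuity)
  have key := step_int _ hF a b hab
  have harg : ∀ x : ℝ, π / 2 * ((a + b - 2 * x) / (b - a)) =
      -(π / (b - a)) * x + π * (a + b) / (2 * (b - a)) := by
    intro x; field_simp; ring
  have heq : (∫ x in a..b, Real.sin (π / 2 * ((a + b - 2 * x) / (b - a))) *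
      Real.sign (x - (a + b) / 2)) =
      ∫ x in a..b, Real.sin (-(π / (b - a)) * x + π * (a + b) / (2 * (b - a))) *
        Real.sign (x - (a + b) / 2) := by
    apply intervalIntegral.integral_congr; intro x _; dsimp only; rw [harg x]
  rw [heq, key, sin_affine_int _ _ _ _ hc, sin_affine_int _ _ _ _ hc]
  have e1 : -(π / (b - a)) * ((a + b) / 2) + π * (a + b) / (2 * (b - a)) = 0 := by
    field_simp; ring
  have e2 : -(π / (b - a)) * b + π * (a + b) / (2 * (b - a)) = -(π / 2) := by
    field_simp; ring
  have e3 : -(π / (b - a)) * a + π * (a + b) / (2 * (b - a)) = π / 2 := by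
    field_simp; ring
  rw [e1, e2, e3]
  rw [Real.cos_neg]
  simp [Real.cos_pi_div_two]
  ring

theorem chebyshev_mixed_sharpness_computation
    (a b c d : ℝ) (hab : a < b) (hcd : c < d)
    (f g : ℝ → ℝ → ℝ)
    (hf : ∀ x y, f x y =
      Real.sin (π / 2 * ((a + b - 2 * x) / (b - a))) *
        Real.sin (π / 2 * ((c + d - 2 * y) / (d - c))))
    (hg : ∀ x y, g x y = Real.sign (x - (a + b) / 2) * Real.sign (y - (c + d) / 2)) :
    (∫ t in a..b, ∫ s in c..d, g t s) = 0 ∧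
    (∫ x in a..b, ∫ y in c..d, f x y * g x y) = 4 / π ^ 2 * ((b - a) * (d - c)) := by
  constructor
  · have h : ∀ t, (∫ s in c..d, g t s) = 0 := by
      intro t
      simp_rw [hg]
      rw [intervalIntegral.integral_const_mul, sign_int c d hcd, mul_zero]
    simp [h]
  · have h : ∀ x, (∫ y in c..d, f x y * g x y) =
        (Real.sin (π / 2 * ((a + b - 2 * x) / (b - a))) * Real.sign (x - (a + b) / 2)) *
          (-(2 * (d - c) / π)) := by
      intro x
      have he : ∀ y, f x y * g x y =
          (Real.sin (π / 2 * ((a + b - 2 * x) / (b - a))) * Real.sign (x - (a + b) / 2)) *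
            (Real.sin (π / 2 * ((c + d - 2 * y) / (d - c))) * Real.sign (y - (c + d) / 2)) := by
        intro y; rw [hf, hg]; ring
      simp_rw [he]
      rw [intervalIntegral.integral_const_mul, sin_sign_int c d hcd]
    simp_rw [h]
    rw [intervalIntegral.integral_mul_const, sin_sign_int a b hab]
    field_simp
    ring
end
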